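/- arXiv:0811.1809 — 7 statements merged into one kernel-verified Lean document; each statement's English description precedes it below -/
import Mathlib

section
/- Let D ⊆ ℂ be open, let H : D → ℂ be analytic, and let Q be analytic on an open set containing H(D). Let z ∈ D, R > 0, let K ≥ 1, A ≥ 1 be constants, let q ≥ 2 be an integer, let ρ > 0, and let c ∈ Comp(z, Q∘H, R) be a point with H'(c) = 0. Assume: (i) Q'(H(z)) ≠ 0 and Comp(H(z), Q, R) ⊆ B(H(z), K·R·|Q'(H(z))|⁻¹); (ii) diam(Comp(z, Q∘H, R)) ≤ ρ; (iii) for every w ∈ D with |w − c| ≤ ρ one has A⁻¹·|w − c|^q ≤ |H(w) − H(c)| and |H'(w)| ≤ A·|w − c|^{q−1}; (iv) (Q∘H)'(z) ≠ 0. Then |z − c| ≤ K·A²·|(Q∘H)'(z)|⁻¹·R. -/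
open Metric Set Function

/-- `Comp D z F r` is the connected component containing `z` of the preimage, within the
domain `D`, of the ball `B(F z, r)` under `F`. -/
def Comp (D : Set ℂ) (z : ℂ) (F : ℂ → ℂ) (r : ℝ) : Set ℂ :=
  connectedComponentIn (D ∩ F ⁻¹' Metric.ball (F z) r) z

/-! Put `r = |z - c|`. Near the critical point `c` we have `|H z - H c| ≥ r^q / A` and
`|H'(z)| ≤ A r^(q-1)`. Since `H` maps `Comp(z, Q∘H, R)` into `Comp(H z, Q, R)`, hypothesis (i)
gives `|H z - H c| < K R / |Q'(H z)|`, so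
`r |(Q∘H)'(z)| = r |Q'(H z)| |H'(z)| ≤ A |Q'(H z)| r^q ≤ K A² R`. -/

lemma le_sq_mul_div_of_pow_le {r d A b : ℝ} {q : ℕ} (hq : 1 ≤ q) (hr : 0 ≤ r) (hA : 0 ≤ A)
    (hd : 0 < d) (hpow : r ^ q ≤ A * b) (hder : d ≤ A * r ^ (q - 1)) :
    r ≤ A ^ 2 * b / d := by
  rw [le_div_iff₀ hd]
  calc r * d ≤ r * (A * r ^ (q - 1)) := by gcongr
    _ = A * r ^ q := by rw [mul_left_comm, mul_pow_sub_one (by omega)]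
    _ ≤ A * (A * b) := by gcongr
    _ = A ^ 2 * b := by ring

lemma dist_le_of_ediam_le_ofReal {X : Type*} [PseudoMetricSpace X] {s : Set X} {x y : X}
    {ρ : ℝ} (hx : x ∈ s) (hy : y ∈ s) (hxy : 0 < dist x y)
    (hdiam : ediam s ≤ ENNReal.ofReal ρ) : dist x y ≤ ρ := by
  have h := edist_dist x y ▸ edist_le_of_ediam_le hx hy hdiam
  exact (ENNReal.ofReal_le_ofReal_iff'.1 h).resolve_right hxy.not_ge

namespace Comp

lemma mem_self_of_mem {D : Set ℂ} {z c : ℂ} {F : ℂ → ℂ} {r : ℝ} (hc : c ∈ Comp D z F r) :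
    z ∈ Comp D z F r :=
  mem_connectedComponentIn (connectedComponentIn_nonempty_iff.1 ⟨c, hc⟩)

lemma subset {D : Set ℂ} {z : ℂ} {F : ℂ → ℂ} {r : ℝ} :
    Comp D z F r ⊆ D ∩ F ⁻¹' ball (F z) r :=
  connectedComponentIn_subset _ _

lemma mapsTo_comp {D E : Set ℂ} {z : ℂ} {H Q : ℂ → ℂ} {r : ℝ} (hH : ContinuousOn H D)
    (hHD : MapsTo H D E) : MapsTo H (Comp D z (Q ∘ H) r) (Comp E (H z) Q r) := by
  intro x hx
  have hsub : H '' Comp D z (Q ∘ H) r ⊆ E ∩ Q ⁻¹' ball (Q (H z)) r := by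
    rintro _ ⟨y, hy, rfl⟩
    exact ⟨hHD (subset hy).1, (subset hy).2⟩
  exact (isPreconnected_connectedComponentIn.image H (hH.mono fun y hy => (subset hy).1))
    |>.subset_connectedComponentIn (mem_image_of_mem H (mem_self_of_mem hx)) hsub
      (mem_image_of_mem H hx)

end Comp

theorem stmt1_general (D E : Set ℂ) (hD : IsOpen D) (hE : IsOpen E)
    (H Q : ℂ → ℂ) (hH : DifferentiableOn ℂ H D) (hQ : DifferentiableOn ℂ Q E)
    (hHD : H '' D ⊆ E)
    (z : ℂ) (R : ℝ)
    (K A : ℝ) (hA : 1 ≤ A)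
    (q : ℕ) (hq : 2 ≤ q) (ρ : ℝ)
    (c : ℂ) (hc : c ∈ Comp D z (Q ∘ H) R) (hc' : deriv H c = 0)
    (hKoebe : Comp E (H z) Q R ⊆ ball (H z) (K * R * ‖deriv Q (H z)‖⁻¹))
    (hdiam : EMetric.diam (Comp D z (Q ∘ H) R) ≤ ENNReal.ofReal ρ)
    (hlow : ∀ w ∈ D, ‖w - c‖ ≤ ρ →
      A⁻¹ * ‖w - c‖ ^ q ≤ ‖H w - H c‖ ∧
      ‖deriv H w‖ ≤ A * ‖w - c‖ ^ (q - 1))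
    (hQH : deriv (Q ∘ H) z ≠ 0) :
    ‖z - c‖ ≤ K * A ^ 2 * ‖deriv (Q ∘ H) z‖⁻¹ * R := by
  have hzS : z ∈ Comp D z (Q ∘ H) R := Comp.mem_self_of_mem hc
  have hz : z ∈ D := (Comp.subset hzS).1
  have hchain : deriv (Q ∘ H) z = deriv Q (H z) * deriv H z :=
    deriv_comp z (hQ.differentiableAt (hE.mem_nhds (hHD ⟨z, hz, rfl⟩)))
      (hH.differentiableAt (hD.mem_nhds hz))
  obtain ⟨hQ', hH'⟩ := mul_ne_zero_iff.1 (hchain ▸ hQH)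
  have hzc : z ≠ c := by rintro rfl; exact hH' hc'
  have hdist : ‖z - c‖ ≤ ρ := by
    simpa only [dist_eq_norm] using
      dist_le_of_ediam_le_ofReal hzS hc (dist_pos.2 hzc) hdiam
  obtain ⟨hlow₁, hlow₂⟩ := hlow z hz hdist
  have hHc : ‖H z - H c‖ ≤ K * R * ‖deriv Q (H z)‖⁻¹ := by
    have := hKoebe (Comp.mapsTo_comp hH.continuousOn (mapsTo_iff_image_subset.2 hHD) hc)
    rw [mem_ball, dist_comm, dist_eq_norm] at this
    exact this.le
  have hpow : ‖z - c‖ ^ q ≤ A * (K * R * ‖deriv Q (H z)‖⁻¹) := by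
    rw [← inv_mul_le_iff₀ (by positivity)]
    exact hlow₁.trans hHc
  calc ‖z - c‖ ≤ A ^ 2 * (K * R * ‖deriv Q (H z)‖⁻¹) / ‖deriv H z‖ :=
        le_sq_mul_div_of_pow_le (by omega) (norm_nonneg _) (by positivity)
          (norm_pos_iff.2 hH') hpow hlow₂
    _ = K * A ^ 2 * ‖deriv (Q ∘ H) z‖⁻¹ * R := by
        rw [hchain, norm_mul]; field_simp

/-- Let `D ⊆ ℂ` be open, `H` analytic on `D`, and `Q` analytic on an open set `E` containing
`H(D)`. Let `z ∈ D`, `R > 0`, `K, A ≥ 1`, `q ≥ 2` an integer, `ρ > 0`, and let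
`c ∈ Comp(z, Q∘H, R)` be a point with `H'(c) = 0`. Assume:
(i) `Q'(H z) ≠ 0` and `Comp(H z, Q, R) ⊆ B(H z, K R |Q'(H z)|⁻¹)`;
(ii) `diam (Comp(z, Q∘H, R)) ≤ ρ`;
(iii) for every `w ∈ D` with `|w − c| ≤ ρ`, `A⁻¹ |w − c|^q ≤ |H w − H c|` and
`|H'(w)| ≤ A |w − c|^(q−1)`;
(iv) `(Q∘H)'(z) ≠ 0`.
Then `|z − c| ≤ K A² |(Q∘H)'(z)|⁻¹ R`. -/
theorem stmt1 (D E : Set ℂ) (hD : IsOpen D) (hE : IsOpen E)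
    (H Q : ℂ → ℂ) (hH : DifferentiableOn ℂ H D) (hQ : DifferentiableOn ℂ Q E)
    (hHD : H '' D ⊆ E)
    (z : ℂ) (hz : z ∈ D) (R : ℝ) (hR : 0 < R)
    (K A : ℝ) (hK : 1 ≤ K) (hA : 1 ≤ A)
    (q : ℕ) (hq : 2 ≤ q) (ρ : ℝ) (hρ : 0 < ρ)
    (c : ℂ) (hc : c ∈ Comp D z (Q ∘ H) R) (hc' : deriv H c = 0)
    (hQ' : deriv Q (H z) ≠ 0)
    (hKoebe : Comp E (H z) Q R ⊆ ball (H z) (K * R * ‖deriv Q (H z)‖⁻¹))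
    (hdiam : EMetric.diam (Comp D z (Q ∘ H) R) ≤ ENNReal.ofReal ρ)
    (hlow : ∀ w ∈ D, ‖w - c‖ ≤ ρ →
      A⁻¹ * ‖w - c‖ ^ q ≤ ‖H w - H c‖ ∧
      ‖deriv H w‖ ≤ A * ‖w - c‖ ^ (q - 1))
    (hQH : deriv (Q ∘ H) z ≠ 0) :
    ‖z - c‖ ≤ K * A ^ 2 * ‖deriv (Q ∘ H) z‖⁻¹ * R :=
  stmt1_general D E hD hE H Q hH hQ hHD z R K A hA q hq ρ c hc hc' hKoebe hdiam hlow hQH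
end

section
/- There exists a constant K ≥ 1 (independent of all the data below) with the following property. Let U, V ⊆ ℂ be open, let H : U → V be analytic, let z ∈ U, and let R > 0 be such that there exists an analytic map H_z⁻¹ : B(H(z), 2R) → U with H_z⁻¹(H(z)) = z and H(H_z⁻¹(w)) = w for all w ∈ B(H(z), 2R). Let t ≥ 0 and let (m₁, m₂) be a t-conformal pair of measures for H. If m₂ is strongly lower t-estimable at H(z) with constant L, radius r₀ ∈ (0, R/2], and size λ ∈ (0, 1], then m₁ is strongly lower t-estimable at z with constant L, radius K⁻¹·|H'(z)|⁻¹·r₀, and size K²·λ. -/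
/-!
An injective holomorphic map on `B(a, ρ)` covers `B(f a, ρ |f'(a)| / 768)`: for an omitted value `v`,
a branch of `log (f - v)` has derivative of size `≥ 768 / ρ` at `a`, so by Bloch's maximisation
argument its image contains a disc of radius `> π`, hence two points `2πi` apart, contradicting
injectivity. Applied to the inverse branch `g` on `B(H z, 2R)`, and then to `H` on the disc this
gives around `z`, the covering property combined with the Schwarz lemma and Cauchy's estimate shows
that `|H'| ≤ C |H'(z)|` near `z` and that `g` is `C |H'(z)|⁻¹`-Lipschitz near `H z`. For `y` near
`z`, `w = H y` and `M = C |H'(z)|`, the set `A = g(B(w, λ M r))` then satisfies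
`L (M r)^t ≤ m₂(B(w, λ M r)) = ∫_A |H'|^t dm₁ ≤ M^t m₁(A)` and `A ⊆ B(y, K² λ r)`.
-/

open Metric Set MeasureTheory

/-- A pair `(m₁, m₂)` of measures is `t`-conformal for `H` on `U` if
`m₂ (H '' A) = ∫_A |H'|^t dm₁` for every Borel set `A ⊆ U` on which `H` is injective. -/
def ConformalPair (H : ℂ → ℂ) (U : Set ℂ) (t : ℝ) (m₁ m₂ : Measure ℂ) : Prop :=
  ∀ A : Set ℂ, A ⊆ U → MeasurableSet A → Set.InjOn H A →
    m₂ (H '' A) = ∫⁻ x in A, ENNReal.ofReal (‖deriv H x‖ ^ t) ∂m₁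

/-- `m` is strongly lower `t`-estimable at `x` with constant `L`, radius `R` and size `lam` if
`m (B(y, lam·r)) ≥ L·r^t` for every `y ∈ B(x, R)` and every `0 < r ≤ R`. -/
def StronglyLowerEst (m : Measure ℂ) (t : ℝ) (x : ℂ) (L R lam : ℝ) : Prop :=
  ∀ y ∈ ball x R, ∀ r : ℝ, 0 < r → r ≤ R →
    ENNReal.ofReal (L * r ^ t) ≤ m (ball y (lam * r))

open Filter Topology

namespace Complex

theorem exists_log_of_ne_zero_on_ball {f : ℂ → ℂ} {c : ℂ} {r : ℝ}
    (hf : DifferentiableOn ℂ f (ball c r)) (hf₀ : ∀ z ∈ ball c r, f z ≠ 0) :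
    ∃ ℓ : ℂ → ℂ, ∀ z ∈ ball c r, HasDerivAt ℓ (deriv f z / f z) z ∧ exp (ℓ z) = f z := by
  have hf' : DifferentiableOn ℂ (deriv f) (ball c r) :=
    (hf.analyticOnNhd isOpen_ball).deriv.differentiableOn
  obtain ⟨F, hF⟩ := (hf'.div hf hf₀).isExactOn_ball
  have hfd : ∀ z ∈ ball c r, HasDerivAt f (deriv f z) z := fun z hz =>
    (hf.differentiableAt (isOpen_ball.mem_nhds hz)).hasDerivAt
  have hE : ∀ z ∈ ball c r, HasDerivAt (fun z => f z * exp (-F z)) 0 z := by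
    intro z hz
    refine ((hfd z hz).mul (hF z hz).neg.cexp).congr_deriv ?_
    change deriv f z * exp (-F z) + f z * (exp (-F z) * -(deriv f z / f z)) = 0
    field_simp [hf₀ z hz]
    ring
  rcases (ball c r).eq_empty_or_nonempty with hempty | ⟨c₀, hc₀⟩
  · exact ⟨0, by simp [hempty]⟩
  set κ := f c₀ * exp (-F c₀)
  have hconst : ∀ z ∈ ball c r, f z * exp (-F z) = κ := fun z hz =>
    isOpen_ball.is_const_of_deriv_eq_zero (convex_ball c r).isPreconnected
      (fun z hz => (hE z hz).differentiableAt.differentiableWithinAt)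
      (fun z hz => (hE z hz).deriv) hz hc₀
  have hκ : κ ≠ 0 := mul_ne_zero (hf₀ c₀ hc₀) (exp_ne_zero _)
  refine ⟨fun z => F z + log κ, fun z hz => ⟨(hF z hz).add_const _, ?_⟩⟩
  rw [exp_add, exp_log hκ, ← hconst z hz, exp_neg]
  field_simp

theorem ball_subset_image_closedBall_of_norm_deriv_sub_le {f : ℂ → ℂ} {c m : ℂ} {ε : ℝ}
    (hε : 0 < ε) (hf : ∀ x ∈ closedBall c ε, DifferentiableAt ℂ f x)
    (hm : ∀ x ∈ closedBall c ε, ‖deriv f x - m‖ ≤ ‖m‖ / 2) :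
    ball (f c) (‖m‖ * ε / 4) ⊆ f '' closedBall c ε := by
  rcases eq_or_ne m 0 with rfl | hm₀
  · simp
  have hlin : ∀ x ∈ closedBall c ε, ‖m‖ / 2 * ‖x - c‖ ≤ ‖f x - f c‖ := by
    intro x hx
    have hmv := (convex_closedBall c ε).norm_image_sub_le_of_norm_hasDerivWithin_le
      (f := fun x => f x - m * x) (fun x hx =>
        ((hf x hx).hasDerivAt.sub ((hasDerivAt_id x).const_mul m)).hasDerivWithinAt)
      (fun x hx => by simpa using hm x hx) (mem_closedBall_self hε.le) hx
    have := norm_sub_norm_le (m * (x - c)) (f x - f c)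
    rw [norm_mul] at this
    rw [show f x - m * x - (f c - m * c) = -(m * (x - c) - (f x - f c)) by ring, norm_neg] at hmv
    linarith
  have hne : ∃ᶠ x in 𝓝 c, f x ≠ f c := by
    refine Frequently.filter_mono ?_ (nhdsWithin_le_nhds (s := {c}ᶜ))
    refine Eventually.frequently ?_
    filter_upwards [eventually_nhdsWithin_of_eventually_nhds (closedBall_mem_nhds c hε),
      self_mem_nhdsWithin] with x hx hxc
    have := hlin x hx
    intro h
    rw [h, sub_self, norm_zero] at this
    have : 0 < ‖m‖ / 2 * ‖x - c‖ := by
      have := sub_ne_zero.2 hxc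
      positivity
    linarith
  convert DiffContOnCl.ball_subset_image_closedBall (ε := ‖m‖ * ε / 2)
    (DifferentiableOn.diffContOnCl_ball (fun x hx => (hf x hx).differentiableWithinAt)
      subset_rfl) hε
    (fun x hx => by
      have := hlin x (sphere_subset_closedBall hx)
      rw [mem_sphere_iff_norm.1 hx] at this
      linarith) hne using 2
  ring

theorem ball_subset_image_ball_of_norm_deriv_le {f : ℂ → ℂ} {c : ℂ} {δ : ℝ}
    (hf : DifferentiableOn ℂ f (ball c δ)) (hbound : ∀ ζ ∈ ball c δ, ‖deriv f ζ‖ ≤ 2 * ‖deriv f c‖) :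
    ball (f c) (‖deriv f c‖ * δ / 24) ⊆ f '' ball c δ := by
  intro v hv
  set m := ‖deriv f c‖
  have hmδ : 0 < m * δ := by linarith [nonempty_ball.1 ⟨v, hv⟩]
  have hδ : 0 < δ := pos_of_mul_pos_right hmδ (norm_nonneg _)
  have hschwarz : ∀ ζ ∈ ball c δ, dist (deriv f ζ) (deriv f c) ≤ 3 * m / δ * dist ζ c :=
    fun ζ hζ => dist_le_div_mul_dist_of_mapsTo_ball
      (hf.analyticOnNhd isOpen_ball).deriv.differentiableOn (fun ζ hζ => by
        rw [mem_closedBall]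
        linarith [dist_le_norm_add_norm (deriv f ζ) (deriv f c), hbound ζ hζ]) hζ
  have hnear : ∀ ζ ∈ closedBall c (δ / 6), ‖deriv f ζ - deriv f c‖ ≤ m / 2 := by
    intro ζ hζ
    calc ‖deriv f ζ - deriv f c‖ ≤ 3 * m / δ * dist ζ c := by
          rw [← dist_eq_norm]; exact hschwarz ζ (mem_ball.2 (by linarith [mem_closedBall.1 hζ]))
      _ ≤ 3 * m / δ * (δ / 6) := by gcongr; exact mem_closedBall.1 hζ
      _ = m / 2 := by field_simp; ring
  have hsub : closedBall c (δ / 6) ⊆ ball c δ := closedBall_subset_ball (by linarith)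
  refine image_mono hsub (ball_subset_image_closedBall_of_norm_deriv_sub_le (by positivity)
    (fun ζ hζ => hf.differentiableAt (isOpen_ball.mem_nhds (hsub hζ))) hnear ?_)
  convert hv using 2
  ring

theorem exists_ball_subset_image_ball {f : ℂ → ℂ} {a : ℂ} {ρ : ℝ}
    (hf : DifferentiableOn ℂ f (ball a ρ)) :
    ∃ b, ball b (ρ * ‖deriv f a‖ / 96) ⊆ f '' ball a ρ := by
  by_cases hpos : 0 < ρ * ‖deriv f a‖
  swap
  · exact ⟨a, by simp [ball_eq_empty.2 (by linarith [not_lt.1 hpos] : ρ * ‖deriv f a‖ / 96 ≤ 0)]⟩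
  have hρ : 0 < ρ := pos_of_mul_pos_left hpos (norm_nonneg _)
  have hsub : closedBall a (ρ / 2) ⊆ ball a ρ := closedBall_subset_ball (by linarith)
  -- Bloch's trick: at a maximiser `ζ₀` of `(ρ/2 - |ζ - a|) |f' ζ|`, with `δ = ρ/2 - |ζ₀ - a|`,
  -- the derivative is at most `2 |f' ζ₀|` on `ball ζ₀ (δ/2)`.
  obtain ⟨ζ₀, hζ₀, hmax⟩ := (isCompact_closedBall a (ρ / 2)).exists_isMaxOn
    (nonempty_closedBall.2 (by linarith))
    (((continuous_const.sub (continuous_id.dist continuous_const)).continuousOn).mul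
      (((hf.analyticOnNhd isOpen_ball).deriv.continuousOn.mono hsub).norm) :
      ContinuousOn (fun ζ => (ρ / 2 - dist ζ a) * ‖deriv f ζ‖) (closedBall a (ρ / 2)))
  set δ := ρ / 2 - dist ζ₀ a with hδ_def
  have hδm : ρ / 2 * ‖deriv f a‖ ≤ δ * ‖deriv f ζ₀‖ := by
    simpa using hmax (mem_closedBall_self (by linarith : 0 ≤ ρ / 2))
  have hδ : 0 < δ := by
    have := mem_closedBall.1 hζ₀
    nlinarith [norm_nonneg (deriv f ζ₀)]
  have hball : ball ζ₀ (δ / 2) ⊆ closedBall a (ρ / 2) := fun ζ hζ => by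
    rw [mem_closedBall]; linarith [dist_triangle ζ ζ₀ a, mem_ball.1 hζ, hδ_def]
  have hbound : ∀ ζ ∈ ball ζ₀ (δ / 2), ‖deriv f ζ‖ ≤ 2 * ‖deriv f ζ₀‖ := fun ζ hζ => by
    have h1 : (ρ / 2 - dist ζ a) * ‖deriv f ζ‖ ≤ δ * ‖deriv f ζ₀‖ := hmax (hball hζ)
    have h2 : δ / 2 ≤ ρ / 2 - dist ζ a := by
      linarith [dist_triangle ζ ζ₀ a, mem_ball.1 hζ, hδ_def]
    nlinarith [norm_nonneg (deriv f ζ)]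
  refine ⟨f ζ₀, (ball_subset_ball ?_).trans
    ((ball_subset_image_ball_of_norm_deriv_le (hf.mono (hball.trans hsub)) hbound).trans
      (image_mono (hball.trans hsub)))⟩
  linarith

theorem ball_subset_image_ball_of_injOn {f : ℂ → ℂ} {a : ℂ} {ρ : ℝ}
    (hf : DifferentiableOn ℂ f (ball a ρ)) (hinj : InjOn f (ball a ρ)) :
    ball (f a) (ρ * ‖deriv f a‖ / 768) ⊆ f '' ball a ρ := by
  intro v hv
  by_contra hv'
  have hρ : 0 < ρ :=
    pos_of_mul_pos_left (by linarith [nonempty_ball.1 ⟨v, hv⟩]) (norm_nonneg (deriv f a))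
  -- a branch `ℓ` of `log (f - v)` is injective, so its image contains no two points `2πi` apart
  obtain ⟨ℓ, hℓ⟩ := exists_log_of_ne_zero_on_ball (hf.sub_const v)
    (fun ζ hζ h => hv' ⟨ζ, hζ, sub_eq_zero.1 h⟩)
  have hva : 0 < ‖f a - v‖ := norm_pos_iff.2 (sub_ne_zero.2 fun h => hv' ⟨a, mem_ball_self hρ, h⟩)
  have hℓa : ‖deriv ℓ a‖ = ‖deriv f a‖ / ‖f a - v‖ := by
    rw [(hℓ a (mem_ball_self hρ)).1.deriv, deriv_sub_const, norm_div]
  obtain ⟨b, hb⟩ := exists_ball_subset_image_ball (f := ℓ) (a := a) (ρ := ρ)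
    fun ζ hζ => (hℓ ζ hζ).1.differentiableAt.differentiableWithinAt
  have hrad : 8 < ρ * ‖deriv ℓ a‖ / 96 := by
    rw [hℓa, mul_div_assoc', lt_div_iff₀ (by norm_num), lt_div_iff₀ hva]
    have := mem_ball'.1 hv
    rw [dist_eq_norm] at this
    linarith
  obtain ⟨ζ₁, hζ₁, hℓ₁⟩ := hb (mem_ball_self (by linarith))
  obtain ⟨ζ₂, hζ₂, hℓ₂⟩ := hb (show b + 2 * Real.pi * I ∈ ball b _ by
    rw [mem_ball, dist_eq_norm, add_sub_cancel_left, norm_mul, norm_I, mul_one, norm_mul,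
      norm_real, Real.norm_of_nonneg Real.pi_pos.le, Complex.norm_ofNat]
    linarith [Real.pi_lt_four])
  have hfeq : f ζ₁ = f ζ₂ := by
    rw [← sub_left_inj (a := v), ← (hℓ ζ₁ hζ₁).2, ← (hℓ ζ₂ hζ₂).2, hℓ₁, hℓ₂, exp_add,
      exp_two_pi_mul_I, mul_one]
  have := hinj hζ₁ hζ₂ hfeq
  subst this
  have : (2 * Real.pi * I : ℂ) = 0 := by linear_combination hℓ₁ - hℓ₂
  simp [I_ne_zero] at this

theorem mapsTo_closedBall_of_mapsTo_ball {f : ℂ → ℂ} {c p : ℂ} {R₁ R₂ : ℝ}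
    (hmaps : MapsTo f (ball c R₁) (ball p R₂)) (hR₁ : 0 < R₁) :
    MapsTo f (ball c R₁) (closedBall (f c) (2 * R₂)) := fun z hz => by
  rw [mem_closedBall]
  linarith [dist_triangle_right (f z) (f c) p, mem_ball.1 (hmaps hz),
    mem_ball.1 (hmaps (mem_ball_self hR₁))]

theorem dist_le_of_mapsTo_ball {f : ℂ → ℂ} {c p z : ℂ} {R₁ R₂ : ℝ}
    (hf : DifferentiableOn ℂ f (ball c R₁)) (hmaps : MapsTo f (ball c R₁) (ball p R₂))
    (hz : z ∈ ball c R₁) : dist (f z) (f c) ≤ 2 * R₂ / R₁ * dist z c :=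
  dist_le_div_mul_dist_of_mapsTo_ball hf
    (mapsTo_closedBall_of_mapsTo_ball hmaps (nonempty_ball.1 ⟨z, hz⟩)) hz

theorem norm_deriv_le_of_mapsTo_ball {f : ℂ → ℂ} {c p : ℂ} {R₁ R₂ : ℝ}
    (hf : DifferentiableOn ℂ f (ball c R₁)) (hmaps : MapsTo f (ball c R₁) (ball p R₂))
    (hR₁ : 0 < R₁) : ‖deriv f c‖ ≤ 2 * R₂ / R₁ :=
  norm_deriv_le_div_of_mapsTo_ball hf (mapsTo_closedBall_of_mapsTo_ball hmaps hR₁) hR₁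

end Complex

open Complex

structure IsInverseBranch (H g : ℂ → ℂ) (U : Set ℂ) (w₀ : ℂ) (s : ℝ) : Prop where
  isOpen : IsOpen U
  differentiableOn_left : DifferentiableOn ℂ H U
  differentiableOn : DifferentiableOn ℂ g (ball w₀ s)
  mapsTo : MapsTo g (ball w₀ s) U
  leftInvOn : LeftInvOn H g (ball w₀ s)

theorem ConformalPair.measure_le_of_leftInvOn {H g : ℂ → ℂ} {U B : Set ℂ} {t M : ℝ}
    {m₁ m₂ : Measure ℂ} (hpair : ConformalPair H U t m₁ m₂) (ht : 0 ≤ t)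
    (hB : MeasurableSet B) (hg : ContinuousOn g B) (hgU : MapsTo g B U) (hHg : LeftInvOn H g B)
    (hM : ∀ x ∈ B, ‖deriv H (g x)‖ ≤ M) :
    m₂ B ≤ ENNReal.ofReal (M ^ t) * m₁ (g '' B) := by
  have hA : MeasurableSet (g '' B) := hB.image_of_continuousOn_injOn hg hHg.injOn
  calc m₂ B = m₂ (H '' (g '' B)) := by rw [hHg.image_image]
    _ = ∫⁻ x in g '' B, ENNReal.ofReal (‖deriv H x‖ ^ t) ∂m₁ :=
        hpair _ (image_subset_iff.2 hgU) hA (LeftInvOn.injOn hHg.rightInvOn_image)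
    _ ≤ ∫⁻ _ in g '' B, ENNReal.ofReal (M ^ t) ∂m₁ := by
        refine setLIntegral_mono' hA ?_
        rintro _ ⟨x, hx, rfl⟩
        exact ENNReal.ofReal_le_ofReal (Real.rpow_le_rpow (norm_nonneg _) (hM x hx) ht)
    _ = ENNReal.ofReal (M ^ t) * m₁ (g '' B) := setLIntegral_const _ _

theorem ENNReal.ofReal_mul_rpow_le_of_le_mul {L M r t : ℝ} {a : ENNReal} (hM : 0 < M)
    (hr : 0 ≤ r) (h : ENNReal.ofReal (L * (M * r) ^ t) ≤ ENNReal.ofReal (M ^ t) * a) :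
    ENNReal.ofReal (L * r ^ t) ≤ a := by
  have hMt : 0 < M ^ t := Real.rpow_pos_of_pos hM t
  rwa [Real.mul_rpow hM.le hr, mul_left_comm, ENNReal.ofReal_mul hMt.le,
    ENNReal.mul_le_mul_iff_right (ENNReal.ofReal_pos.2 hMt).ne' ENNReal.ofReal_ne_top] at h

namespace IsInverseBranch

variable {H g : ℂ → ℂ} {U : Set ℂ} {w₀ : ℂ} {s : ℝ}

theorem deriv_mul_deriv (h : IsInverseBranch H g U w₀ s) {w : ℂ} (hw : w ∈ ball w₀ s) :
    deriv H (g w) * deriv g w = 1 := by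
  have hcomp : HasDerivAt (H ∘ g) (deriv H (g w) * deriv g w) w :=
    (h.differentiableOn_left.differentiableAt (h.isOpen.mem_nhds (h.mapsTo hw))).hasDerivAt.comp
      w (h.differentiableOn.differentiableAt (isOpen_ball.mem_nhds hw)).hasDerivAt
  refine hcomp.unique ((hasDerivAt_id w).congr_of_eventuallyEq ?_)
  filter_upwards [isOpen_ball.mem_nhds hw] with x hx using h.leftInvOn hx

theorem norm_deriv_left (h : IsInverseBranch H g U w₀ s) (hs : 0 < s) :
    ‖deriv H (g w₀)‖ = ‖deriv g w₀‖⁻¹ :=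
  eq_inv_of_mul_eq_one_left (by rw [← norm_mul, h.deriv_mul_deriv (mem_ball_self hs), norm_one])

theorem norm_deriv_pos (h : IsInverseBranch H g U w₀ s) (hs : 0 < s) : 0 < ‖deriv g w₀‖ :=
  norm_pos_iff.2 (right_ne_zero_of_mul_eq_one (h.deriv_mul_deriv (mem_ball_self hs)))

theorem ball_subset_image (h : IsInverseBranch H g U w₀ s) :
    ball (g w₀) (s * ‖deriv g w₀‖ / 768) ⊆ g '' ball w₀ s :=
  ball_subset_image_ball_of_injOn h.differentiableOn h.leftInvOn.injOn

theorem symm (h : IsInverseBranch H g U w₀ s) :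
    IsInverseBranch g H (ball w₀ s) (g w₀) (s * ‖deriv g w₀‖ / 768) where
  isOpen := isOpen_ball
  differentiableOn_left := h.differentiableOn
  differentiableOn := h.differentiableOn_left.mono
    (h.ball_subset_image.trans (image_subset_iff.2 h.mapsTo))
  mapsTo := by
    rintro _ hy
    obtain ⟨w, hw, rfl⟩ := h.ball_subset_image hy
    rwa [h.leftInvOn hw]
  leftInvOn := by
    rintro _ hy
    obtain ⟨w, hw, rfl⟩ := h.ball_subset_image hy
    rw [h.leftInvOn hw]

theorem dist_left_le (h : IsInverseBranch H g U w₀ s) {y : ℂ}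
    (hy : y ∈ ball (g w₀) (s * ‖deriv g w₀‖ / 768)) :
    dist (H y) w₀ ≤ 768 / ‖deriv g w₀‖ * dist y (g w₀) := by
  have hr := nonempty_ball.1 ⟨y, hy⟩
  have hs : 0 < s := pos_of_mul_pos_left (by linarith) (norm_nonneg _)
  have := dist_le_div_mul_dist_of_mapsTo_ball h.symm.differentiableOn
    (h.symm.mapsTo.mono_right (by rw [h.leftInvOn (mem_ball_self hs)]; exact ball_subset_closedBall)) hy
  rwa [h.leftInvOn (mem_ball_self hs),
    div_div_eq_mul_div, mul_div_mul_left _ _ hs.ne'] at this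

theorem norm_deriv_left_le (h : IsInverseBranch H g U w₀ s) {x : ℂ}
    (hx : x ∈ ball (g w₀) (s * ‖deriv g w₀‖ / 1536)) : ‖deriv H x‖ ≤ 3072 / ‖deriv g w₀‖ := by
  have hr := nonempty_ball.1 ⟨x, hx⟩
  have hs : 0 < s := pos_of_mul_pos_left (by linarith) (norm_nonneg _)
  have hsub : ball x (s * ‖deriv g w₀‖ / 1536) ⊆ ball (g w₀) (s * ‖deriv g w₀‖ / 768) :=
    ball_subset_ball' (by linarith [mem_ball.1 hx])
  have := norm_deriv_le_of_mapsTo_ball (h.symm.differentiableOn.mono hsub)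
    (h.symm.mapsTo.mono_left hsub) hr
  convert this using 1
  field_simp
  ring

theorem mapsTo_ball_right (h : IsInverseBranch H g U w₀ s) (hs : 0 < s) :
    MapsTo g (ball w₀ (s / 768 ^ 2)) (ball (g w₀) (s * ‖deriv g w₀‖ / 768)) := by
  have hd := h.norm_deriv_pos hs
  have := h.symm.ball_subset_image
  rw [h.leftInvOn (mem_ball_self hs), h.norm_deriv_left hs,
    show s * ‖deriv g w₀‖ / 768 * ‖deriv g w₀‖⁻¹ / 768 = s / 768 ^ 2 by field_simp] at this
  rintro w hw
  obtain ⟨x, hx, rfl⟩ := this hw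
  rwa [h.symm.leftInvOn hx]

theorem dist_right_le (h : IsInverseBranch H g U w₀ s) {w x : ℂ}
    (hw : w ∈ ball w₀ (s / (2 * 768 ^ 2))) (hx : x ∈ ball w (s / (2 * 768 ^ 2))) :
    dist (g x) (g w) ≤ 3072 * ‖deriv g w₀‖ * dist x w := by
  have hr := nonempty_ball.1 ⟨x, hx⟩
  have hs : 0 < s := by linarith [div_pos_iff.1 hr]
  have hsub : ball w (s / (2 * 768 ^ 2)) ⊆ ball w₀ (s / 768 ^ 2) :=
    ball_subset_ball' (by linarith [mem_ball.1 hw])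
  have := dist_le_of_mapsTo_ball (h.differentiableOn.mono (hsub.trans (ball_subset_ball (by
    linarith [div_le_self hs.le (by norm_num : (1 : ℝ) ≤ 768 ^ 2)]))))
    ((h.mapsTo_ball_right hs).mono_left hsub) hx
  convert this using 2
  field_simp
  ring

theorem mem_ball_and_dist_left_lt (h : IsInverseBranch H g U w₀ s) {r₀ : ℝ} {y : ℂ}
    (hr₀s : r₀ ≤ s / 4) (hy : y ∈ ball (g w₀) ((768 ^ 4)⁻¹ * ‖deriv g w₀‖ * r₀)) :
    y ∈ ball (g w₀) (s * ‖deriv g w₀‖ / 768) ∧ dist (H y) w₀ < r₀ / 768 ^ 3 := by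
  set d := ‖deriv g w₀‖
  have hρ : 0 < (768 ^ 4 : ℝ)⁻¹ * d * r₀ := nonempty_ball.1 ⟨y, hy⟩
  have hr₀ : 0 < r₀ := pos_of_mul_pos_right hρ (by positivity)
  have hd : 0 < d := h.norm_deriv_pos (by linarith)
  have hy₁ : y ∈ ball (g w₀) (s * d / 768) := by
    refine mem_ball.2 ((mem_ball.1 hy).trans_le ?_)
    calc (768 ^ 4 : ℝ)⁻¹ * d * r₀ = d * (r₀ / 768 ^ 4) := by ring
      _ ≤ d * (s / 768) := mul_le_mul_of_nonneg_left (by linarith) hd.le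
      _ = s * d / 768 := by ring
  refine ⟨hy₁, ?_⟩
  calc dist (H y) w₀ ≤ 768 / d * dist y (g w₀) := h.dist_left_le hy₁
    _ < 768 / d * ((768 ^ 4)⁻¹ * d * r₀) := by gcongr; exact hy
    _ = r₀ / 768 ^ 3 := by field_simp

theorem distortion_on_ball (h : IsInverseBranch H g U w₀ s) {r₀ lam r : ℝ} {y : ℂ}
    (hr₀s : r₀ ≤ s / 4) (hlam : lam ≤ 1) (hy : y ∈ ball (g w₀) ((768 ^ 4)⁻¹ * ‖deriv g w₀‖ * r₀))
    (hr : 0 < r) (hrρ : r ≤ (768 ^ 4)⁻¹ * ‖deriv g w₀‖ * r₀) :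
    ∀ x ∈ ball (H y) (lam * (3072 / ‖deriv g w₀‖ * r)), x ∈ ball w₀ s ∧
      dist (g x) y < 3072 ^ 2 * lam * r ∧ ‖deriv H (g x)‖ ≤ 3072 / ‖deriv g w₀‖ := by
  intro x hx
  set d := ‖deriv g w₀‖
  obtain ⟨hy₁, hw⟩ := h.mem_ball_and_dist_left_lt hr₀s hy
  have hr₀ : 0 < r₀ := pos_of_mul_pos_right (nonempty_ball.1 ⟨y, hy⟩) (by positivity)
  have hd : 0 < d := h.norm_deriv_pos (by linarith)
  have hxw : dist x (H y) < lam * (3072 / d * r) := hx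
  have hr' : lam * (3072 / d * r) ≤ 3072 * r₀ / 768 ^ 4 := by
    calc lam * (3072 / d * r) ≤ 3072 / d * r := mul_le_of_le_one_left (by positivity) hlam
      _ ≤ 3072 / d * ((768 ^ 4)⁻¹ * d * r₀) := by gcongr
      _ = 3072 * r₀ / 768 ^ 4 := by field_simp
  have hgx : dist (g x) y < 3072 ^ 2 * lam * r := by
    rw [← h.symm.leftInvOn hy₁]
    calc dist (g x) (g (H y)) ≤ 3072 * d * dist x (H y) :=
          h.dist_right_le (mem_ball.2 (by linarith)) (mem_ball.2 (by linarith))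
      _ < 3072 * d * (lam * (3072 / d * r)) := by gcongr
      _ = 3072 ^ 2 * lam * r := by field_simp
  refine ⟨mem_ball.2 (by linarith [dist_triangle x (H y) w₀]), hgx, ?_⟩
  refine h.norm_deriv_left_le (mem_ball.2 ?_)
  have hlamr : lam * r ≤ (768 ^ 4 : ℝ)⁻¹ * d * r₀ := by nlinarith
  calc dist (g x) (g w₀) ≤ dist (g x) y + dist y (g w₀) := dist_triangle _ _ _
    _ < (3072 ^ 2 + 1) * ((768 ^ 4)⁻¹ * d * r₀) := by nlinarith [mem_ball.1 hy]
    _ = d * ((3072 ^ 2 + 1) * r₀ / 768 ^ 4) := by ring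
    _ ≤ d * (s / 1536) := mul_le_mul_of_nonneg_left (by linarith) hd.le
    _ = s * d / 1536 := by ring

theorem stronglyLowerEst {t L r₀ lam : ℝ} {m₁ m₂ : Measure ℂ}
    (h : IsInverseBranch H g U w₀ s) (hpair : ConformalPair H U t m₁ m₂) (ht : 0 ≤ t)
    (hr₀s : r₀ ≤ s / 4) (hlam : lam ≤ 1) (hm₂ : StronglyLowerEst m₂ t w₀ L r₀ lam) :
    StronglyLowerEst m₁ t (g w₀) L ((768 ^ 4)⁻¹ * ‖deriv g w₀‖ * r₀) ((768 ^ 4) ^ 2 * lam) := by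
  intro y hy r hr hrρ
  set d := ‖deriv g w₀‖
  have hr₀ : 0 < r₀ := pos_of_mul_pos_right (nonempty_ball.1 ⟨y, hy⟩) (by positivity)
  have hd : 0 < d := h.norm_deriv_pos (by linarith)
  have hw := (h.mem_ball_and_dist_left_lt hr₀s hy).2
  have hr' : 0 < 3072 / d * r := by positivity
  have hr'le : 3072 / d * r ≤ r₀ := by
    calc 3072 / d * r ≤ 3072 / d * ((768 ^ 4)⁻¹ * d * r₀) := by gcongr
      _ = 3072 * r₀ / 768 ^ 4 := by field_simp
      _ ≤ r₀ := by linarith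
  have hB := h.distortion_on_ball hr₀s hlam hy hr hrρ
  have hsub : ball (H y) (lam * (3072 / d * r)) ⊆ ball w₀ s := fun x hx => (hB x hx).1
  have hmeas := hpair.measure_le_of_leftInvOn ht measurableSet_ball
    (h.differentiableOn.continuousOn.mono hsub) (h.mapsTo.mono_left hsub)
    (h.leftInvOn.mono hsub) (fun x hx => (hB x hx).2.2)
  refine ((hm₂ (H y) (mem_ball.2 (by linarith)) _ hr' hr'le).trans hmeas |>
    ENNReal.ofReal_mul_rpow_le_of_le_mul (by positivity) hr.le).trans (measure_mono ?_)
  rintro _ ⟨x, hx, rfl⟩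
  have hlam₀ : 0 < lam := pos_of_mul_pos_left (nonempty_ball.1 ⟨x, hx⟩) hr'.le
  refine mem_ball.2 ((hB x hx).2.1.trans_le ?_)
  gcongr
  norm_num

end IsInverseBranch

/-- There exists a universal constant `K ≥ 1` such that: if `H : U → V` is analytic between open
subsets of `ℂ`, `z ∈ U`, and `H` has an analytic inverse branch defined on `B(H z, 2R)` sending
`H z` to `z`, `(m₁, m₂)` is a `t`-conformal pair for `H`, and `m₂` is strongly lower
`t`-estimable at `H z` with constant `L`, radius `r₀ ∈ (0, R/2]` and size `lam ∈ (0,1]`, then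
`m₁` is strongly lower `t`-estimable at `z` with constant `L`, radius `K⁻¹ |H'(z)|⁻¹ r₀`, and
size `K² lam`. -/
theorem stmt2 :
    ∃ K : ℝ, 1 ≤ K ∧
      ∀ (U V : Set ℂ), IsOpen U → IsOpen V →
      ∀ H : ℂ → ℂ, DifferentiableOn ℂ H U → MapsTo H U V →
      ∀ z ∈ U, ∀ R : ℝ, 0 < R →
      ∀ g : ℂ → ℂ, DifferentiableOn ℂ g (ball (H z) (2 * R)) →
        MapsTo g (ball (H z) (2 * R)) U → g (H z) = z →
        (∀ w ∈ ball (H z) (2 * R), H (g w) = w) →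
      ∀ t : ℝ, 0 ≤ t →
      ∀ m₁ m₂ : Measure ℂ, IsFiniteMeasure m₁ → IsFiniteMeasure m₂ →
        ConformalPair H U t m₁ m₂ →
      ∀ L r₀ lam : ℝ, 0 < L → 0 < r₀ → r₀ ≤ R / 2 → 0 < lam → lam ≤ 1 →
        StronglyLowerEst m₂ t (H z) L r₀ lam →
        StronglyLowerEst m₁ t z L (K⁻¹ * (‖deriv H z‖)⁻¹ * r₀) (K ^ 2 * lam) := by
  refine ⟨768 ^ 4, by norm_num, ?_⟩
  intro U V hU _ H hH _ z _ R hR g hg hgU hgz hHg t ht m₁ m₂ _ _ hpair L r₀ lam _ _ hr₀R _ hlam hm₂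
  have h : IsInverseBranch H g U (H z) (2 * R) := ⟨hU, hH, hg, hgU, hHg⟩
  have hderiv := h.norm_deriv_left (by linarith)
  have := h.stronglyLowerEst hpair ht (by linarith) hlam hm₂
  rwa [hgz, ← inv_inv ‖deriv g (H z)‖, ← hderiv, hgz] at this
end

section
/- Let U, V ⊆ ℂ be open with U connected, let H : U → V be analytic and nonconstant, and let c ∈ U with H'(c) = 0. Let q ≥ 2 be an integer, A ≥ 1, T > 0, and t ≥ 0. Assume: (i) B(c, (A·T)^{1/q}) ⊆ U and for every w ∈ B(c, (A·T)^{1/q}) one has A⁻¹·|w − c|^q ≤ |H(w) − H(c)| and |H'(w)| ≤ A·|w − c|^{q−1}; (ii) B(H(c), r) ⊆ H(B(c, (A·r)^{1/q})) for every 0 < r ≤ T. Let (m₁, m₂) be a t-conformal pair of measures for H. If m₂ is lower t-estimable at H(c) with constant L and radius T, then m₁ is lower t-estimable at c with constant A^{−2t}·L and radius (A·T)^{1/q}. -/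
/-!
Put `ρ = r^q / A`, so that (ii) gives `B(H c, ρ) ⊆ H(B(c, r))`. Away from its countably many
critical points a nonconstant analytic map is locally injective, so `B(c, r)` is covered by
countably many injectivity pieces; disjointifying them, conformality yields
`m₂(H(B(c, r))) ≤ ∫_{B(c,r)} |H'|^t dm₁ ≤ (A r^(q-1))^t m₁(B(c, r))` by the derivative bound in (i).
Combined with `m₂(B(H c, ρ)) ≥ L ρ^t` and `ρ^t = A^(-2t) r^t (A r^(q-1))^t`, this is the claim.
-/

open Metric Set MeasureTheory

/-- `m` is lower `t`-estimable at `x` with constant `L` and radius `R` if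
`m (B(x, r)) ≥ L·r^t` for every `0 < r ≤ R`. -/
def LowerEst (m : Measure ℂ) (t : ℝ) (x : ℂ) (L R : ℝ) : Prop :=
  ∀ r : ℝ, 0 < r → r ≤ R → ENNReal.ofReal (L * r ^ t) ≤ m (ball x r)

theorem HasStrictDerivAt.exists_isOpen_injOn {𝕜 : Type*} [NontriviallyNormedField 𝕜]
    [CompleteSpace 𝕜] {f : 𝕜 → 𝕜} {f' x : 𝕜} (hf : HasStrictDerivAt f f' x) (hf' : f' ≠ 0) :
    ∃ W : Set 𝕜, IsOpen W ∧ x ∈ W ∧ InjOn f W := by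
  let e := (hf.hasStrictFDerivAt_equiv hf').toOpenPartialHomeomorph f
  exact ⟨e.source, e.open_source, HasStrictFDerivAt.mem_toOpenPartialHomeomorph_source _, e.injOn⟩

section Analytic

variable {U : Set ℂ} {H : ℂ → ℂ}

theorem countable_setOf_deriv_eq_zero (hU : IsOpen U) (hUconn : IsPreconnected U)
    (hH : DifferentiableOn ℂ H U) (hnc : ∃ a ∈ U, ∃ b ∈ U, H a ≠ H b) :
    {z | deriv H z = 0 ∧ z ∈ U}.Countable := by
  rcases (hH.analyticOnNhd hU).deriv.eqOn_zero_or_eventually_ne_zero_of_preconnected hUconn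
    with hzero | hne
  · obtain ⟨a, ha, b, hb, hab⟩ := hnc
    exact absurd (hU.is_const_of_deriv_eq_zero hUconn hH hzero ha hb) hab
  · exact (HereditarilyLindelofSpace.isLindelof _).countable_of_isDiscrete
      (isDiscrete_of_codiscreteWithin (s := {z | deriv H z = 0}) hne)

theorem exists_injOn_cover (hU : IsOpen U) (hUconn : IsPreconnected U)
    (hH : DifferentiableOn ℂ H U) (hnc : ∃ a ∈ U, ∃ b ∈ U, H a ≠ H b) :
    ∃ s : ℕ → Set ℂ, (∀ n, MeasurableSet (s n)) ∧ (∀ n, InjOn H (s n)) ∧ U ⊆ ⋃ n, s n := by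
  set N := {z | deriv H z ≠ 0 ∧ z ∈ U}
  have hloc : ∀ z ∈ N, ∃ W : Set ℂ, IsOpen W ∧ z ∈ W ∧ InjOn H W := fun z hz =>
    ((hH.analyticOnNhd hU z hz.2).hasStrictDerivAt).exists_isOpen_injOn hz.1
  choose! W hWopen hWmem hWinj using hloc
  obtain ⟨T, hTN, hTc, hTW⟩ := TopologicalSpace.isOpen_biUnion_countable N W hWopen
  set 𝒮 : Set (Set ℂ) := insert ∅ ((fun z => {z}) '' {z | deriv H z = 0 ∧ z ∈ U} ∪ W '' T)
  have h𝒮c : 𝒮.Countable :=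
    (((countable_setOf_deriv_eq_zero hU hUconn hH hnc).image _).union (hTc.image W)).insert ∅
  have h𝒮 : ∀ s ∈ 𝒮, MeasurableSet s ∧ InjOn H s := by
    rintro s (rfl | ⟨z, -, rfl⟩ | ⟨z, hz, rfl⟩)
    · exact ⟨.empty, injOn_empty H⟩
    · exact ⟨measurableSet_singleton z, injOn_singleton H z⟩
    · exact ⟨(hWopen z (hTN hz)).measurableSet, hWinj z (hTN hz)⟩
  have hU𝒮 : U ⊆ ⋃₀ 𝒮 := by
    intro z hz
    by_cases hdz : deriv H z = 0
    · exact ⟨{z}, .inr (.inl ⟨z, ⟨hdz, hz⟩, rfl⟩), rfl⟩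
    · have hzW : z ∈ ⋃ y ∈ T, W y := hTW ▸ mem_biUnion ⟨hdz, hz⟩ (hWmem z ⟨hdz, hz⟩)
      obtain ⟨y, hy, hzy⟩ := mem_iUnion₂.mp hzW
      exact ⟨W y, .inr (.inr ⟨y, hy, rfl⟩), hzy⟩
  obtain ⟨s, hs⟩ := h𝒮c.exists_eq_range (insert_nonempty _ _)
  rw [hs, sUnion_range] at hU𝒮
  exact ⟨s, fun n => (h𝒮 _ (hs ▸ mem_range_self n)).1, fun n => (h𝒮 _ (hs ▸ mem_range_self n)).2,
    hU𝒮⟩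

end Analytic

namespace ConformalPair

variable {H : ℂ → ℂ} {U K : Set ℂ} {t : ℝ} {m₁ m₂ : Measure ℂ}

theorem measure_image_le_setLIntegral (hconf : ConformalPair H U t m₁ m₂)
    {s : ℕ → Set ℂ} (hs : ∀ n, MeasurableSet (s n)) (hinj : ∀ n, InjOn H (s n))
    (hUs : U ⊆ ⋃ n, s n) (hK : MeasurableSet K) (hKU : K ⊆ U) :
    m₂ (H '' K) ≤ ∫⁻ x in K, ENNReal.ofReal (‖deriv H x‖ ^ t) ∂m₁ := by
  have hKd : K = ⋃ n, K ∩ disjointed s n := by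
    rw [← inter_iUnion, iUnion_disjointed, inter_eq_left.mpr (hKU.trans hUs)]
  have hmeas : ∀ n, MeasurableSet (K ∩ disjointed s n) :=
    fun n => hK.inter (MeasurableSet.disjointed hs n)
  calc m₂ (H '' K) = m₂ (⋃ n, H '' (K ∩ disjointed s n)) := by
        rw [← image_iUnion, ← hKd]
    _ ≤ ∑' n, m₂ (H '' (K ∩ disjointed s n)) := measure_iUnion_le _
    _ = ∑' n, ∫⁻ x in K ∩ disjointed s n, ENNReal.ofReal (‖deriv H x‖ ^ t) ∂m₁ :=
        tsum_congr fun n => hconf _ (inter_subset_left.trans hKU) (hmeas n)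
          ((hinj n).mono (inter_subset_right.trans (disjointed_subset s n)))
    _ = ∫⁻ x in K, ENNReal.ofReal (‖deriv H x‖ ^ t) ∂m₁ := by
        rw [← lintegral_iUnion hmeas ((disjoint_disjointed s).mono fun i j h =>
          h.mono inter_subset_right inter_subset_right), ← hKd]

theorem measure_image_le_mul_of_norm_deriv_le (hconf : ConformalPair H U t m₁ m₂)
    {s : ℕ → Set ℂ} (hs : ∀ n, MeasurableSet (s n)) (hinj : ∀ n, InjOn H (s n))
    (hUs : U ⊆ ⋃ n, s n) (hK : MeasurableSet K) (hKU : K ⊆ U) (ht : 0 ≤ t) {M : ℝ}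
    (hM : ∀ x ∈ K, ‖deriv H x‖ ≤ M) :
    m₂ (H '' K) ≤ ENNReal.ofReal (M ^ t) * m₁ K := by
  calc m₂ (H '' K) ≤ ∫⁻ x in K, ENNReal.ofReal (‖deriv H x‖ ^ t) ∂m₁ :=
        hconf.measure_image_le_setLIntegral hs hinj hUs hK hKU
    _ ≤ ∫⁻ _ in K, ENNReal.ofReal (M ^ t) ∂m₁ := setLIntegral_mono' hK fun x hx =>
        ENNReal.ofReal_le_ofReal (Real.rpow_le_rpow (norm_nonneg _) (hM x hx) ht)
    _ = ENNReal.ofReal (M ^ t) * m₁ K := setLIntegral_const _ _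

end ConformalPair

theorem ENNReal.ofReal_le_of_ofReal_mul_le {a b : ℝ} {m : ENNReal} (hb : 0 < b)
    (h : ENNReal.ofReal (a * b) ≤ ENNReal.ofReal b * m) : ENNReal.ofReal a ≤ m := by
  rcases le_total a 0 with ha | ha
  · simp [ENNReal.ofReal_of_nonpos ha]
  · rw [ENNReal.ofReal_mul ha, mul_comm] at h
    exact (ENNReal.mul_le_mul_iff_right (ENNReal.ofReal_pos.mpr hb).ne' ENNReal.ofReal_ne_top).mp h

theorem rpow_pow_div_eq {A r t : ℝ} {q : ℕ} (hA : 0 < A) (hr : 0 ≤ r) (hq : 1 ≤ q) :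
    (r ^ q / A) ^ t = A ^ (-(2 * t)) * r ^ t * (A * r ^ (q - 1)) ^ t := by
  have hsplit : r ^ q / A = (A ^ 2)⁻¹ * r * (A * r ^ (q - 1)) := by
    rw [← Nat.sub_add_cancel hq, pow_succ', Nat.add_sub_cancel]
    field_simp
  rw [hsplit, Real.mul_rpow (by positivity) (by positivity), Real.mul_rpow (by positivity) hr,
    Real.inv_rpow (by positivity), ← Real.rpow_natCast, ← Real.rpow_mul hA.le,
    Real.rpow_neg hA.le]
  norm_num

theorem stmt3_general (U : Set ℂ) (hU : IsOpen U) (hUconn : IsConnected U)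
    (H : ℂ → ℂ) (hH : DifferentiableOn ℂ H U)
    (c : ℂ) (hcU : c ∈ U)
    (hnonconst : ∃ w ∈ U, H w ≠ H c)
    (q : ℕ) (hq : 2 ≤ q) (A T t : ℝ) (hA : 1 ≤ A) (hT : 0 < T) (ht : 0 ≤ t)
    (hball : ball c ((A * T) ^ ((q : ℝ)⁻¹)) ⊆ U)
    (hlocal : ∀ w ∈ ball c ((A * T) ^ ((q : ℝ)⁻¹)),
      A⁻¹ * ‖w - c‖ ^ q ≤ ‖H w - H c‖ ∧
      ‖deriv H w‖ ≤ A * ‖w - c‖ ^ (q - 1))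
    (hsurj : ∀ r : ℝ, 0 < r → r ≤ T →
      ball (H c) r ⊆ H '' ball c ((A * r) ^ ((q : ℝ)⁻¹)))
    (m₁ m₂ : Measure ℂ)
    (hconf : ConformalPair H U t m₁ m₂)
    (L : ℝ) (hest : LowerEst m₂ t (H c) L T) :
    LowerEst m₁ t c (A ^ (-(2 * t)) * L) ((A * T) ^ ((q : ℝ)⁻¹)) := by
  intro r hr hrR
  have hA0 : 0 < A := one_pos.trans_le hA
  have hq0 : q ≠ 0 := by omega
  -- chosen so that `hsurj` at radius `ρ` produces exactly the ball `B(c, r)`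
  set ρ := r ^ q / A
  have hρ : 0 < ρ := by positivity
  have hρT : ρ ≤ T := by
    rw [div_le_iff₀ hA0, mul_comm]
    calc r ^ q ≤ ((A * T) ^ ((q : ℝ)⁻¹)) ^ q := by gcongr
      _ = A * T := Real.rpow_inv_natCast_pow (by positivity) hq0
  have hAρ : (A * ρ) ^ ((q : ℝ)⁻¹) = r := by
    rw [mul_div_cancel₀ _ hA0.ne', Real.pow_rpow_inv_natCast hr.le hq0]
  have hKU : ball c r ⊆ U := (ball_subset_ball hrR).trans hball
  have hderiv : ∀ x ∈ ball c r, ‖deriv H x‖ ≤ A * r ^ (q - 1) := fun x hx =>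
    (hlocal x (ball_subset_ball hrR hx)).2.trans (by gcongr; exact (mem_ball_iff_norm.mp hx).le)
  obtain ⟨w, hwU, hw⟩ := hnonconst
  obtain ⟨s, hs, hinj, hUs⟩ := exists_injOn_cover hU hUconn.isPreconnected hH ⟨w, hwU, c, hcU, hw⟩
  have hm₂ : m₂ (ball (H c) ρ) ≤ ENNReal.ofReal ((A * r ^ (q - 1)) ^ t) * m₁ (ball c r) :=
    (measure_mono (hAρ ▸ hsurj ρ hρ hρT)).trans
      (hconf.measure_image_le_mul_of_norm_deriv_le hs hinj hUs measurableSet_ball hKU ht hderiv)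
  refine ENNReal.ofReal_le_of_ofReal_mul_le (b := (A * r ^ (q - 1)) ^ t) (by positivity) ?_
  calc ENNReal.ofReal (A ^ (-(2 * t)) * L * r ^ t * (A * r ^ (q - 1)) ^ t)
      = ENNReal.ofReal (L * ρ ^ t) := by rw [rpow_pow_div_eq hA0 hr.le (by omega)]; ring_nf
    _ ≤ _ := (hest ρ hρ hρT).trans hm₂

/-- Let `H : U → V` be analytic and nonconstant on the connected open set `U`, with a critical
point `c` (`H'(c) = 0`) of order `q ≥ 2`, so that on `B(c, (A T)^(1/q)) ⊆ U` one has
`A⁻¹ |w − c|^q ≤ |H w − H c|` and `|H'(w)| ≤ A |w − c|^(q−1)`, and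
`B(H c, r) ⊆ H(B(c, (A r)^(1/q)))` for all `0 < r ≤ T`. If `(m₁, m₂)` is a `t`-conformal pair
for `H` and `m₂` is lower `t`-estimable at `H c` with constant `L` and radius `T`, then `m₁`
is lower `t`-estimable at `c` with constant `A^(−2t) L` and radius `(A T)^(1/q)`. -/
theorem stmt3 (U V : Set ℂ) (hU : IsOpen U) (hUconn : IsConnected U) (hV : IsOpen V)
    (H : ℂ → ℂ) (hH : DifferentiableOn ℂ H U) (hHV : MapsTo H U V)
    (c : ℂ) (hcU : c ∈ U) (hc : deriv H c = 0)
    (hnonconst : ∃ w ∈ U, H w ≠ H c)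
    (q : ℕ) (hq : 2 ≤ q) (A T t : ℝ) (hA : 1 ≤ A) (hT : 0 < T) (ht : 0 ≤ t)
    (hball : ball c ((A * T) ^ ((q : ℝ)⁻¹)) ⊆ U)
    (hlocal : ∀ w ∈ ball c ((A * T) ^ ((q : ℝ)⁻¹)),
      A⁻¹ * ‖w - c‖ ^ q ≤ ‖H w - H c‖ ∧
      ‖deriv H w‖ ≤ A * ‖w - c‖ ^ (q - 1))
    (hsurj : ∀ r : ℝ, 0 < r → r ≤ T →
      ball (H c) r ⊆ H '' ball c ((A * r) ^ ((q : ℝ)⁻¹)))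
    (m₁ m₂ : Measure ℂ) (hm₁ : IsFiniteMeasure m₁) (hm₂ : IsFiniteMeasure m₂)
    (hconf : ConformalPair H U t m₁ m₂)
    (L : ℝ) (hL : 0 < L) (hest : LowerEst m₂ t (H c) L T) :
    LowerEst m₁ t c (A ^ (-(2 * t)) * L) ((A * T) ^ ((q : ℝ)⁻¹)) :=
  stmt3_general U hU hUconn H hH c hcU hnonconst q hq A T t hA hT ht hball hlocal hsurj m₁ m₂ hconf
    L hest
end

section
/- Let D ⊆ ℂ be open, let f : D → ℂ be analytic and nonconstant on the connected component of D containing a point c ∈ D with f'(c) = 0. Let U ⊆ ℂ be an open set with f(c) ∈ closure(U), and suppose there exists α > 0 such that Leb₂(U ∩ B(x, r)) ≥ α·r² for every x ∈ closure(U) and every 0 < r ≤ 1. Then there exist constants ζ > 0, ξ > 0 and T > 0 such that for every x ∈ B(c, ζ) with f(x) ∈ closure(U) and every 0 < r < T, one has Leb₂(f⁻¹(U) ∩ B(x, r)) ≥ ξ·r², where f⁻¹(U) = {w ∈ D : f(w) ∈ U}. -/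
/-! Near `c` write `f = f c + φ ^ (n + 1)` with `φ` conformal at `c`, so `φ` is bi-Lipschitz near
`c` and, by the area formula, the question reduces to a lower bound for the measure of
`{z ∈ B̄(y, s) | f c + z ^ (n + 1) ∈ U}` with `f c + y ^ (n + 1) ∈ closure U`, uniformly in `y`.
If `‖y‖ ≲ s`, every point of `U ∩ B(f c + y ^ (n + 1), (s/4) ^ (n + 1))` has an `(n + 1)`-st root
in `B̄(0, s/2)` (after subtracting `f c`), where the derivative of `z ^ (n + 1)` is `≲ s ^ n`.
If `‖y‖ ≳ s`, the power map is a bi-Lipschitz perturbation of its linearisation on a ball of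
radius `≍ s` around `y`. In both cases the density of `U` at `f c + y ^ (n + 1)` is pulled back
with a loss that depends only on `n`. -/

open Metric Set MeasureTheory Filter ContinuousLinearMap
open scoped NNReal ENNReal Topology

lemma ContinuousLinearMap.det_restrictScalars_toSpanSingleton (a : ℂ) :
    ((toSpanSingleton ℂ a).restrictScalars ℝ).det = ‖a‖ ^ 2 := by
  simp [ContinuousLinearMap.det, LinearMap.det_restrictScalars, Algebra.norm_complex_eq,
    Complex.normSq_eq_norm_sq]

lemma volume_image_le_of_norm_deriv_le {s : Set ℂ} (hs : MeasurableSet s) {g g' : ℂ → ℂ}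
    (hg : ∀ z ∈ s, HasDerivWithinAt g (g' z) s z) {M : ℝ} (hM : ∀ z ∈ s, ‖g' z‖ ≤ M) :
    volume (g '' s) ≤ ENNReal.ofReal (M ^ 2) * volume s := by
  calc volume (g '' s)
      ≤ ∫⁻ z in s, ENNReal.ofReal |((toSpanSingleton ℂ (g' z)).restrictScalars ℝ).det| :=
        addHaar_image_le_lintegral_abs_det_fderiv volume hs fun z hz =>
          (hg z hz).hasFDerivWithinAt.restrictScalars ℝ
    _ ≤ ∫⁻ _ in s, ENNReal.ofReal (M ^ 2) := by
        refine setLIntegral_mono' hs fun z hz => ENNReal.ofReal_le_ofReal ?_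
        rw [det_restrictScalars_toSpanSingleton, abs_of_nonneg (by positivity)]
        exact pow_le_pow_left₀ (norm_nonneg _) (hM z hz) 2
    _ = ENNReal.ofReal (M ^ 2) * volume s := setLIntegral_const _ _

lemma ApproximatesLinearOn.closedBall_subset_image {𝕜 : Type*} [NontriviallyNormedField 𝕜]
    [CompleteSpace 𝕜] {a : 𝕜} (ha : a ≠ 0) {s : Set 𝕜} {g : 𝕜 → 𝕜}
    (hg : ApproximatesLinearOn g (toSpanSingleton 𝕜 a) s (‖a‖₊ / 2)) {x : 𝕜} {ε : ℝ}
    (hε : 0 ≤ ε) (hxs : closedBall x ε ⊆ s) :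
    closedBall (g x) (‖a‖ / 2 * ε) ⊆ g '' closedBall x ε := by
  let e := ContinuousLinearEquiv.unitsEquivAut 𝕜 (Units.mk0 a ha)
  have he : (e : 𝕜 →L[𝕜] 𝕜) = toSpanSingleton 𝕜 a := by ext; simp [e]
  rw [← he] at hg
  have hsymm : (e.toNonlinearRightInverse.nnnorm : ℝ)⁻¹ = ‖a‖ := by
    have : (e.symm : 𝕜 →L[𝕜] 𝕜) = toSpanSingleton 𝕜 a⁻¹ := by ext; simp [e]
    change ‖(e.symm : 𝕜 →L[𝕜] 𝕜)‖⁻¹ = ‖a‖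
    rw [this, norm_toSpanSingleton, norm_inv, inv_inv]
  have hr : ((e.toNonlinearRightInverse.nnnorm : ℝ)⁻¹ - (‖a‖₊ / 2 : ℝ≥0)) * ε = ‖a‖ / 2 * ε := by
    rw [hsymm]; push_cast; ring
  have := hg.surjOn_closedBall_of_nonlinearRightInverse e.toNonlinearRightInverse hε hxs
  rwa [hr] at this

lemma approximatesLinearOn_of_norm_deriv_sub_le {𝕜 G : Type*} [RCLike 𝕜] [NormedAddCommGroup G]
    [NormedSpace 𝕜 G] {s : Set 𝕜} (hs : Convex ℝ s) {g g' : 𝕜 → G}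
    (hg : ∀ z ∈ s, HasDerivWithinAt g (g' z) s z) {a : G} {C : ℝ≥0}
    (hC : ∀ z ∈ s, ‖g' z - a‖ ≤ C) :
    ApproximatesLinearOn g (toSpanSingleton 𝕜 a) s C := by
  intro z hz w hw
  have hsub : ∀ y ∈ s, HasDerivWithinAt (fun y => g y - y • a) (g' y - a) s y := fun y hy =>
    (hg y hy).sub (by simpa using (hasDerivWithinAt_id y s).smul_const a)
  have := hs.norm_image_sub_le_of_norm_hasDerivWithin_le hsub hC hw hz
  convert this using 2
  simp only [toSpanSingleton_apply, sub_smul]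
  abel

lemma volume_inter_closedBall_le_volume_preimage_inter_closedBall {s : Set ℂ} (hs : Convex ℝ s)
    {g g' : ℂ → ℂ} (hg : ∀ z ∈ s, HasDerivWithinAt g (g' z) s z) {a : ℂ} (ha : a ≠ 0)
    (hga : ∀ z ∈ s, ‖g' z - a‖ ≤ ‖a‖ / 2) {V : Set ℂ} (hV : IsOpen V) {x : ℂ} {ε : ℝ}
    (hε : 0 ≤ ε) (hxs : closedBall x ε ⊆ s) :
    volume (V ∩ closedBall (g x) (‖a‖ / 2 * ε)) ≤
      ENNReal.ofReal ((3 / 2 * ‖a‖) ^ 2) * volume (g ⁻¹' V ∩ closedBall x ε) := by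
  have happ : ApproximatesLinearOn g (toSpanSingleton ℂ a) s (‖a‖₊ / 2) :=
    approximatesLinearOn_of_norm_deriv_sub_le hs hg (by simpa using hga)
  have hmeas : MeasurableSet (g ⁻¹' V ∩ closedBall x ε) := by
    have hcont : ContinuousOn g (closedBall x ε) := fun z hz =>
      ((hg z (hxs hz)).continuousWithinAt).mono hxs
    obtain ⟨u, hu, hVu⟩ := continuousOn_iff'.1 hcont V hV
    rw [hVu]
    exact hu.measurableSet.inter measurableSet_closedBall
  calc volume (V ∩ closedBall (g x) (‖a‖ / 2 * ε))
      ≤ volume (g '' (g ⁻¹' V ∩ closedBall x ε)) := by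
        rw [image_preimage_inter]
        exact measure_mono (inter_subset_inter_right V (happ.closedBall_subset_image ha hε hxs))
    _ ≤ ENNReal.ofReal ((3 / 2 * ‖a‖) ^ 2) * volume (g ⁻¹' V ∩ closedBall x ε) := by
        refine volume_image_le_of_norm_deriv_le hmeas
          (fun z hz => (hg z (hxs hz.2)).mono (inter_subset_right.trans hxs)) fun z hz => ?_
        linarith [norm_le_norm_add_norm_sub' (g' z) a, hga z (hxs hz.2)]

lemma norm_pow_sub_pow_le_of_norm_sub_le {𝕜 : Type*} [NormedField 𝕜] {θ : ℝ} (hθ : 0 ≤ θ)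
    {y z : 𝕜} (hzy : ‖z - y‖ ≤ θ * ‖y‖) (n : ℕ) :
    ‖z ^ n - y ^ n‖ ≤ ((1 + θ) ^ n - 1) * ‖y‖ ^ n := by
  induction n with
  | zero => simp
  | succ n ih =>
    have hz : ‖z‖ ≤ (1 + θ) * ‖y‖ := by linarith [norm_le_norm_add_norm_sub' z y]
    have hθn : 0 ≤ (1 + θ) ^ n - 1 := sub_nonneg.2 (one_le_pow₀ (by linarith))
    calc ‖z ^ (n + 1) - y ^ (n + 1)‖ = ‖(z ^ n - y ^ n) * z + y ^ n * (z - y)‖ := by ring_nf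
      _ ≤ ‖z ^ n - y ^ n‖ * ‖z‖ + ‖y‖ ^ n * ‖z - y‖ := by
        simpa only [norm_mul, norm_pow] using norm_add_le ((z ^ n - y ^ n) * z) (y ^ n * (z - y))
      _ ≤ ((1 + θ) ^ n - 1) * ‖y‖ ^ n * ((1 + θ) * ‖y‖) + ‖y‖ ^ n * (θ * ‖y‖) := by gcongr
      _ = ((1 + θ) ^ (n + 1) - 1) * ‖y‖ ^ (n + 1) := by ring

lemma exists_one_add_pow_lt (n : ℕ) {K : ℝ} (hK : 1 < K) :
    ∃ θ ∈ Ioo (0 : ℝ) 1, (1 + θ) ^ n < K := by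
  have hsmall : ∀ᶠ θ in 𝓝 (0 : ℝ), (1 + θ) ^ n < K ∧ θ < 1 := by
    have : Tendsto (fun θ : ℝ => (1 + θ) ^ n) (𝓝 0) (𝓝 1) :=
      (by fun_prop : Continuous fun θ : ℝ => (1 + θ) ^ n).tendsto' 0 1 (by simp)
    exact (this.eventually (gt_mem_nhds hK)).and (gt_mem_nhds one_pos)
  obtain ⟨θ, ⟨hθn, hθ1⟩, hθ0 : 0 < θ⟩ :=
    ((hsmall.filter_mono nhdsWithin_le_nhds).and (self_mem_nhdsWithin (s := Ioi 0))).exists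
  exact ⟨θ, ⟨hθ0, hθ1⟩, hθn⟩

lemma ENNReal.ofReal_div_le_of_le_ofReal_mul {x k : ℝ} (hk : 0 < k) {V : ℝ≥0∞}
    (h : ENNReal.ofReal x ≤ ENNReal.ofReal k * V) : ENNReal.ofReal (x / k) ≤ V := by
  rw [ENNReal.ofReal_div_of_pos hk]
  exact ENNReal.div_le_of_le_mul' h

/-- Condition (osc3) of the nice open set condition, in Euclidean form. -/
def HasUniformLowerDensity (U : Set ℂ) (α : ℝ) : Prop :=
  ∀ x ∈ closure U, ∀ r : ℝ, 0 < r → r ≤ 1 → ENNReal.ofReal (α * r ^ 2) ≤ volume (U ∩ ball x r)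

namespace HasUniformLowerDensity

variable {U : Set ℂ} {α : ℝ}

lemma volume_preimage_add_pow_inter_closedBall_of_norm_le (hdens : HasUniformLowerDensity U α)
    (hU : IsOpen U) (n : ℕ) {p y : ℂ} {σ : ℝ} (hσ : 0 < σ) (hσ1 : σ ≤ 1) (hy : ‖y‖ ≤ σ)
    (hpy : p + y ^ (n + 1) ∈ closure U) :
    ENNReal.ofReal (α / (4 ^ n * (n + 1) ^ 2) * σ ^ 2) ≤
      volume ((fun z => p + z ^ (n + 1)) ⁻¹' U ∩ closedBall y (3 * σ)) := by
  set g : ℂ → ℂ := fun z => p + z ^ (n + 1)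
  set S := closedBall 0 (2 * σ) ∩ g ⁻¹' U
  have hS : MeasurableSet S :=
    measurableSet_closedBall.inter (hU.preimage (by fun_prop)).measurableSet
  have hSsub : S ⊆ g ⁻¹' U ∩ closedBall y (3 * σ) := by
    rintro z ⟨hz, hzU⟩
    refine ⟨hzU, ?_⟩
    rw [mem_closedBall_zero_iff] at hz
    rw [mem_closedBall, dist_eq_norm]
    linarith [norm_sub_le z y]
  have hroots : U ∩ ball (g y) (σ ^ (n + 1)) ⊆ g '' S := by
    rintro w ⟨hwU, hw⟩
    obtain ⟨z, hz⟩ := IsAlgClosed.exists_pow_nat_eq (w - p) n.succ_pos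
    refine ⟨z, ⟨?_, by simpa [g, hz] using hwU⟩, by simp [g, hz]⟩
    rw [mem_closedBall_zero_iff, ← pow_le_pow_iff_left₀ (norm_nonneg z) (by positivity)
      n.succ_ne_zero, ← norm_pow, hz]
    rw [mem_ball, dist_eq_norm] at hw
    have : ‖y ^ (n + 1)‖ ≤ σ ^ (n + 1) := by rw [norm_pow]; gcongr
    calc ‖w - p‖ ≤ ‖w - g y‖ + ‖y ^ (n + 1)‖ := by
          simpa [g] using norm_sub_le_norm_sub_add_norm_sub w (g y) p
      _ ≤ 2 * σ ^ (n + 1) := by linarith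
      _ ≤ (2 * σ) ^ (n + 1) := by
        rw [mul_pow]; gcongr; exact le_self_pow₀ one_le_two n.succ_ne_zero
  have himage : volume (g '' S) ≤ ENNReal.ofReal (((n + 1) * (2 * σ) ^ n) ^ 2) * volume S := by
    refine volume_image_le_of_norm_deriv_le hS
      (fun z _ => ((hasDerivAt_pow (n + 1) z).const_add p).hasDerivWithinAt) fun z hz => ?_
    have := mem_closedBall_zero_iff.1 hz.1
    simp only [add_tsub_cancel_right, norm_mul, norm_pow, Nat.cast_add, Nat.cast_one]
    rw [show ‖(n : ℂ) + 1‖ = n + 1 by exact_mod_cast Complex.norm_natCast (n + 1)]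
    gcongr
  have hchain := (hdens _ hpy _ (by positivity) (pow_le_one₀ hσ.le hσ1)).trans
    ((measure_mono hroots).trans himage)
  refine le_trans ?_ (measure_mono hSsub)
  refine le_trans (le_of_eq ?_) (ENNReal.ofReal_div_le_of_le_ofReal_mul (by positivity) hchain)
  congr 1
  field_simp
  rw [show (4 : ℝ) ^ n = (2 ^ n) ^ 2 by rw [← pow_mul, mul_comm, pow_mul]; norm_num]
  ring

lemma volume_preimage_add_pow_inter_closedBall_of_le_mul_norm
    (hdens : HasUniformLowerDensity U α) (hU : IsOpen U) {n : ℕ} {θ : ℝ} (hθ : 0 ≤ θ)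
    (hθn : (1 + θ) ^ n ≤ 3 / 2) {p y : ℂ} {ε : ℝ} (hε : 0 < ε) (hεy : ε ≤ θ * ‖y‖)
    (hεn : (n + 1) * ‖y‖ ^ n * ε ≤ 2) (hpy : p + y ^ (n + 1) ∈ closure U) :
    ENNReal.ofReal (α / 9 * ε ^ 2) ≤
      volume ((fun z => p + z ^ (n + 1)) ⁻¹' U ∩ closedBall y ε) := by
  set a : ℂ := (n + 1) * y ^ n
  have hn : ‖(n : ℂ) + 1‖ = n + 1 := by exact_mod_cast Complex.norm_natCast (n + 1)
  have hna : ‖a‖ = (n + 1) * ‖y‖ ^ n := by simp only [a, norm_mul, norm_pow, hn]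
  have ha : 0 < ‖a‖ := by
    have : 0 < ‖y‖ := by nlinarith [norm_nonneg y]
    rw [hna]; positivity
  have hderiv : ∀ z ∈ closedBall y ε,
      HasDerivWithinAt (fun z => p + z ^ (n + 1)) ((n + 1) * z ^ n) (closedBall y ε) z := by
    intro z _
    simpa using ((hasDerivAt_pow (n + 1) z).const_add p).hasDerivWithinAt
  have hclose : ∀ z ∈ closedBall y ε, ‖(n + 1) * z ^ n - a‖ ≤ ‖a‖ / 2 := by
    intro z hz
    have hzy : ‖z - y‖ ≤ θ * ‖y‖ := (mem_closedBall_iff_norm.1 hz).trans hεy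
    have := norm_pow_sub_pow_le_of_norm_sub_le hθ hzy n
    rw [← mul_sub, norm_mul, hn, hna]
    calc (n + 1) * ‖z ^ n - y ^ n‖ ≤ (n + 1) * (((1 + θ) ^ n - 1) * ‖y‖ ^ n) := by gcongr
      _ ≤ (n + 1) * (1 / 2 * ‖y‖ ^ n) := by gcongr; linarith
      _ = (n + 1) * ‖y‖ ^ n / 2 := by ring
  have hball := volume_inter_closedBall_le_volume_preimage_inter_closedBall
    (convex_closedBall y ε) hderiv (norm_pos_iff.1 ha) hclose hU hε.le subset_rfl
  have hchain :=
    (hdens _ hpy (‖a‖ / 2 * ε) (mul_pos (half_pos ha) hε) (by rw [hna]; linarith)).trans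
    ((measure_mono (inter_subset_inter_right U ball_subset_closedBall)).trans hball)
  refine le_trans (le_of_eq ?_) (ENNReal.ofReal_div_le_of_le_ofReal_mul
    (pow_pos (mul_pos (by norm_num) ha) 2) hchain)
  congr 1
  field_simp
  ring

lemma exists_le_volume_preimage_add_pow_inter_closedBall (hdens : HasUniformLowerDensity U α)
    (hU : IsOpen U) (hα : 0 < α) (n : ℕ) :
    ∃ β > (0 : ℝ), ∀ p y : ℂ, ∀ s : ℝ, 0 < s → (n + 1) * s ≤ 1 → ‖y‖ ≤ 1 →
      p + y ^ (n + 1) ∈ closure U →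
        ENNReal.ofReal (β * s ^ 2) ≤
          volume ((fun z => p + z ^ (n + 1)) ⁻¹' U ∩ closedBall y s) := by
  obtain ⟨θ, ⟨hθ0, hθ1⟩, hθn⟩ := exists_one_add_pow_lt n (by norm_num : (1 : ℝ) < 3 / 2)
  set c := α / (4 ^ n * (n + 1) ^ 2)
  refine ⟨min (c / 16) (α * θ ^ 2 / 144), by positivity, fun p y s hs hsn hy hpy => ?_⟩
  have hs1 : s ≤ 1 := by nlinarith [n.cast_nonneg (α := ℝ)]
  rcases le_or_gt ‖y‖ (s / 4) with hys | hys
  · have := volume_preimage_add_pow_inter_closedBall_of_norm_le hdens hU n (by positivity)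
      (by linarith) hys hpy
    refine le_trans ?_ (this.trans (measure_mono (inter_subset_inter_right _
      (closedBall_subset_closedBall (by linarith)))))
    refine ENNReal.ofReal_le_ofReal ?_
    have : min (c / 16) (α * θ ^ 2 / 144) ≤ c / 16 := min_le_left _ _
    nlinarith [sq_nonneg s]
  · have hεn : (n + 1) * ‖y‖ ^ n * (θ * (s / 4)) ≤ 2 := by
      have : ‖y‖ ^ n ≤ 1 := pow_le_one₀ (norm_nonneg y) hy
      have : θ * (s / 4) ≤ s := by nlinarith
      calc (n + 1) * ‖y‖ ^ n * (θ * (s / 4)) ≤ (n + 1) * 1 * s := by gcongr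
        _ ≤ 2 := by linarith
    have := volume_preimage_add_pow_inter_closedBall_of_le_mul_norm hdens hU hθ0.le hθn.le
      (by positivity) (by nlinarith) hεn hpy
    refine le_trans ?_ (this.trans (measure_mono (inter_subset_inter_right _
      (closedBall_subset_closedBall (by nlinarith)))))
    refine ENNReal.ofReal_le_ofReal ?_
    have : min (c / 16) (α * θ ^ 2 / 144) ≤ α * θ ^ 2 / 144 := min_le_right _ _
    nlinarith [sq_nonneg s]

lemma exists_le_volume_preimage_inter_closedBall_of_eqOn_add_pow
    (hdens : HasUniformLowerDensity U α) (hU : IsOpen U) (hα : 0 < α) {f φ φ' : ℂ → ℂ}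
    {p c : ℂ} {n : ℕ} {δ : ℝ} (hδ : 0 < δ) (hφc : φ c = 0) (hc : φ' c ≠ 0)
    (hφ : ∀ z ∈ closedBall c δ, HasDerivWithinAt φ (φ' z) (closedBall c δ) z)
    (hφ' : ∀ z ∈ closedBall c δ, ‖φ' z - φ' c‖ ≤ ‖φ' c‖ / 2)
    (hfφ : ∀ z ∈ closedBall c δ, f z = p + φ z ^ (n + 1)) :
    ∃ ζ > (0 : ℝ), ∃ ξ > (0 : ℝ), ∃ T > (0 : ℝ), ∀ x ∈ ball c ζ, f x ∈ closure U →
      ∀ r : ℝ, 0 < r → r < T →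
        ENNReal.ofReal (ξ * r ^ 2) ≤ volume ({w ∈ closedBall c δ | f w ∈ U} ∩ closedBall x r) := by
  set L := ‖φ' c‖
  have hL : 0 < L := norm_pos_iff.2 hc
  obtain ⟨β, hβ, hpow⟩ := hdens.exists_le_volume_preimage_add_pow_inter_closedBall hU hα n
  refine ⟨min (δ / 2) (2 / (3 * L)), by positivity, β / 9, by positivity,
    min (δ / 2) (2 / ((n + 1) * L)), by positivity, fun x hx hfx r hr hrT => ?_⟩
  rw [mem_ball_iff_norm, lt_min_iff] at hx
  rw [lt_min_iff] at hrT
  have hxr : closedBall x r ⊆ closedBall c δ :=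
    closedBall_subset_closedBall' (by rw [dist_eq_norm]; linarith)
  have hxδ : x ∈ closedBall c δ := hxr (mem_closedBall_self hr.le)
  have hy : ‖φ x‖ ≤ 1 := by
    have := (convex_closedBall c δ).norm_image_sub_le_of_norm_hasDerivWithin_le hφ
      (C := 3 / 2 * L)
      (fun z hz => by linarith [norm_le_norm_add_norm_sub' (φ' z) (φ' c), hφ' z hz])
      (mem_closedBall_self hδ.le) hxδ
    rw [hφc, sub_zero] at this
    calc ‖φ x‖ ≤ 3 / 2 * L * (2 / (3 * L)) := this.trans (by gcongr; exact hx.2.le)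
      _ = 1 := by field_simp
  have hlow := hpow p (φ x) (L / 2 * r) (by positivity)
    (by have := (lt_div_iff₀ (by positivity)).1 hrT.2; nlinarith) hy (by rwa [← hfφ x hxδ])
  have hpull := volume_inter_closedBall_le_volume_preimage_inter_closedBall (convex_closedBall c δ)
    hφ hc hφ' (hU.preimage (by fun_prop : Continuous fun z => p + z ^ (n + 1))) hr.le hxr
  have hsub : φ ⁻¹' ((fun z => p + z ^ (n + 1)) ⁻¹' U) ∩ closedBall x r ⊆
      {w ∈ closedBall c δ | f w ∈ U} ∩ closedBall x r :=
    fun z ⟨hzU, hz⟩ => ⟨⟨hxr hz, by rwa [hfφ z (hxr hz)]⟩, hz⟩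
  refine le_trans (le_of_eq ?_) ((ENNReal.ofReal_div_le_of_le_ofReal_mul (by positivity)
    (hlow.trans hpull)).trans (measure_mono hsub))
  congr 1
  field_simp
  ring

end HasUniformLowerDensity

lemma AnalyticAt.exists_pow_eventuallyEq {g : ℂ → ℂ} {c : ℂ} (hg : AnalyticAt ℂ g c)
    (hgc : g c ≠ 0) {n : ℕ} (hn : n ≠ 0) :
    ∃ q : ℂ → ℂ, AnalyticAt ℂ q c ∧ q c ≠ 0 ∧ ∀ᶠ z in 𝓝 c, q z ^ n = g z := by
  obtain ⟨b, hb⟩ := IsAlgClosed.exists_pow_nat_eq (g c) (Nat.pos_of_ne_zero hn)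
  have hb0 : b ≠ 0 := by rintro rfl; exact hgc (by rw [← hb, zero_pow hn])
  have hslit : g c / g c ∈ Complex.slitPlane := by
    rw [div_self hgc]; exact Complex.one_mem_slitPlane
  refine ⟨fun z => b * Complex.exp (Complex.log (g z / g c) / n), ?_, by simp [hgc, hb0], ?_⟩
  · exact analyticAt_const.mul
      (((hg.div analyticAt_const hgc).clog hslit).div_const).cexp
  · filter_upwards [hg.continuousAt.eventually_ne hgc] with z hz
    rw [mul_pow, ← Complex.exp_nat_mul, mul_div_cancel₀ _ (Nat.cast_ne_zero.2 hn),
      Complex.exp_log (div_ne_zero hz hgc), hb, mul_div_cancel₀ _ hgc]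

lemma AnalyticAt.exists_eventuallyEq_add_pow {f : ℂ → ℂ} {c : ℂ} (hf : AnalyticAt ℂ f c)
    (hne : ¬ ∀ᶠ z in 𝓝 c, f z = f c) :
    ∃ (n : ℕ) (φ : ℂ → ℂ), φ c = 0 ∧ AnalyticAt ℂ φ c ∧ deriv φ c ≠ 0 ∧
      ∀ᶠ z in 𝓝 c, f z = f c + φ z ^ (n + 1) := by
  have hF : AnalyticAt ℂ (fun z => f z - f c) c := hf.sub analyticAt_const
  obtain ⟨m, g, hg, hgc, hfg⟩ := hF.exists_eventuallyEq_pow_smul_nonzero_iff.2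
    (by simpa only [sub_eq_zero] using hne)
  obtain _ | n := m
  · exact absurd (by simpa using hfg.self_of_nhds.symm) hgc
  obtain ⟨q, hq, hqc, hqg⟩ := hg.exists_pow_eventuallyEq hgc n.succ_ne_zero
  refine ⟨n, fun z => (z - c) * q z, by simp, (analyticAt_id.sub analyticAt_const).mul hq, ?_, ?_⟩
  · have := ((hasDerivAt_id' c).sub_const c).fun_mul hq.differentiableAt.hasDerivAt
    rw [this.deriv]
    simpa using hqc
  · filter_upwards [hfg, hqg] with z hfz hqz
    rw [mul_pow, hqz, ← smul_eq_mul, ← hfz, add_sub_cancel]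

lemma not_eventually_eq_of_exists_ne_on_connectedComponentIn {D : Set ℂ} (hD : IsOpen D)
    {f : ℂ → ℂ} (hf : DifferentiableOn ℂ f D) {c : ℂ} (hcD : c ∈ D)
    (hnonconst : ∃ w ∈ connectedComponentIn D c, f w ≠ f c) : ¬ ∀ᶠ z in 𝓝 c, f z = f c := by
  intro hconst
  obtain ⟨w, hw, hfw⟩ := hnonconst
  exact hfw (((hf.analyticOnNhd hD).mono (connectedComponentIn_subset D c)
    ).eqOn_of_preconnected_of_eventuallyEq analyticOnNhd_const isPreconnected_connectedComponentIn
      (mem_connectedComponentIn hcD) hconst hw)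

theorem stmt6_general (D : Set ℂ) (hD : IsOpen D)
    (f : ℂ → ℂ) (hf : DifferentiableOn ℂ f D)
    (c : ℂ) (hcD : c ∈ D)
    (hnonconst : ∃ w ∈ connectedComponentIn D c, f w ≠ f c)
    (U : Set ℂ) (hU : IsOpen U)
    (α : ℝ) (hα : 0 < α)
    (hdens : ∀ x ∈ closure U, ∀ r : ℝ, 0 < r → r ≤ 1 →
      ENNReal.ofReal (α * r ^ 2) ≤ volume (U ∩ ball x r)) :
    ∃ ζ > (0 : ℝ), ∃ ξ > (0 : ℝ), ∃ T > (0 : ℝ),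
      ∀ x ∈ ball c ζ, f x ∈ closure U →
      ∀ r : ℝ, 0 < r → r < T →
        ENNReal.ofReal (ξ * r ^ 2) ≤ volume ({w ∈ D | f w ∈ U} ∩ ball x r) := by
  obtain ⟨n, φ, hφc, hφ, hb, hfφ⟩ := (hf.analyticAt (hD.mem_nhds hcD)).exists_eventuallyEq_add_pow
    (not_eventually_eq_of_exists_ne_on_connectedComponentIn hD hf hcD hnonconst)
  obtain ⟨δ, hδ, hloc⟩ := nhds_basis_closedBall.eventually_iff.1 <| (hD.eventually_mem hcD).and <|
    hfφ.and <| (hφ.eventually_analyticAt.mono fun z hz => hz.differentiableAt.hasDerivAt).and <|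
      hφ.deriv.continuousAt.eventually (closedBall_mem_nhds _ (half_pos (norm_pos_iff.2 hb)))
  obtain ⟨ζ, hζ, ξ, hξ, T, hT, hmain⟩ :=
    HasUniformLowerDensity.exists_le_volume_preimage_inter_closedBall_of_eqOn_add_pow hdens hU hα
      hδ hφc hb (fun z hz => (hloc hz).2.2.1.hasDerivWithinAt)
      (fun z hz => mem_closedBall_iff_norm.1 (hloc hz).2.2.2) (fun z hz => (hloc hz).2.1)
  refine ⟨ζ, hζ, ξ / 4, by positivity, T, hT, fun x hx hfx r hr hrT => ?_⟩
  calc ENNReal.ofReal (ξ / 4 * r ^ 2) = ENNReal.ofReal (ξ * (r / 2) ^ 2) := by ring_nf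
    _ ≤ volume ({w ∈ closedBall c δ | f w ∈ U} ∩ closedBall x (r / 2)) :=
      hmain x hx hfx (r / 2) (half_pos hr) (by linarith)
    _ ≤ volume ({w ∈ D | f w ∈ U} ∩ ball x r) :=
      measure_mono (inter_subset_inter (fun w hw => ⟨(hloc hw.1).1, hw.2⟩)
        (closedBall_subset_ball (by linarith)))

/-- Let `D ⊆ ℂ` be open, `f` analytic on `D` and nonconstant on the connected component of `D`
containing `c ∈ D`, where `f'(c) = 0`. Let `U ⊆ ℂ` be open with `f c ∈ closure U`, and suppose
there is `α > 0` with `Leb₂(U ∩ B(x, r)) ≥ α r²` for all `x ∈ closure U` and `0 < r ≤ 1`. Then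
there are `ζ, ξ, T > 0` such that for every `x ∈ B(c, ζ)` with `f x ∈ closure U` and every
`0 < r < T`, `Leb₂(f⁻¹(U) ∩ B(x, r)) ≥ ξ r²`, where `f⁻¹(U) = {w ∈ D : f w ∈ U}`. -/
theorem stmt6 (D : Set ℂ) (hD : IsOpen D)
    (f : ℂ → ℂ) (hf : DifferentiableOn ℂ f D)
    (c : ℂ) (hcD : c ∈ D) (hc : deriv f c = 0)
    (hnonconst : ∃ w ∈ connectedComponentIn D c, f w ≠ f c)
    (U : Set ℂ) (hU : IsOpen U) (hfc : f c ∈ closure U)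
    (α : ℝ) (hα : 0 < α)
    (hdens : ∀ x ∈ closure U, ∀ r : ℝ, 0 < r → r ≤ 1 →
      ENNReal.ofReal (α * r ^ 2) ≤ volume (U ∩ ball x r)) :
    ∃ ζ > (0 : ℝ), ∃ ξ > (0 : ℝ), ∃ T > (0 : ℝ),
      ∀ x ∈ ball c ζ, f x ∈ closure U →
      ∀ r : ℝ, 0 < r → r < T →
        ENNReal.ofReal (ξ * r ^ 2) ≤ volume ({w ∈ D | f w ∈ U} ∩ ball x r) :=
  stmt6_general D hD f hf c hcD hnonconst U hU α hα hdens
end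

section
/- Let (X, ℬ, m) be a probability space and let T : X → X be a map such that T(A) ∈ ℬ whenever A ∈ ℬ. Let {Y_j}_{j≥0} be a sequence of pairwise disjoint measurable subsets of X. If T is finite-to-one, i.e. T⁻¹({x}) is a finite set for every x ∈ X, then lim_{l→∞} m(T(⋃_{j=l}^∞ Y_j)) = 0. -/
/-!
A point `x` has only finitely many preimages under `T`, and each of them lies in at most one
`Y j`; so only finitely many `Y j` meet `T⁻¹ {x}`, and `x ∉ T (⋃_{j ≥ l} Y j)` for large `l`.
The sets `T (⋃_{j ≥ l} Y j)` therefore decrease to `∅`, and continuity from above of the finite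
measure `m` gives the limit `0`.
-/

open MeasureTheory Set Filter

theorem finite_setOf_inter_nonempty_of_pairwise_disjoint {α ι : Type*} {Y : ι → Set α}
    (hdisj : Pairwise (Function.onFun Disjoint Y)) {s : Set α} (hs : s.Finite) :
    {j | (s ∩ Y j).Nonempty}.Finite := by
  have hsub : {j | (s ∩ Y j).Nonempty} ⊆ ⋃ y ∈ s, {j | y ∈ Y j} := by
    rintro j ⟨y, hys, hyj⟩
    exact mem_biUnion hys hyj
  refine (hs.biUnion fun y _ => ?_).subset hsub
  refine Subsingleton.finite fun i hi j hj => ?_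
  by_contra hij
  exact disjoint_left.mp (hdisj hij) hi hj

theorem iInter_image_biUnion_Ici_eq_empty {α : Type*} {T : α → α} {Y : ℕ → Set α}
    (hdisj : Pairwise (Function.onFun Disjoint Y)) (hfto : ∀ x, (T ⁻¹' {x}).Finite) :
    ⋂ l : ℕ, T '' ⋃ j ∈ Ici l, Y j = ∅ := by
  refine eq_empty_of_forall_notMem fun x hx => ?_
  obtain ⟨N, hN⟩ :=
    (finite_setOf_inter_nonempty_of_pairwise_disjoint hdisj (hfto x)).bddAbove
  obtain ⟨y, hy, rfl⟩ := mem_iInter.mp hx (N + 1)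
  obtain ⟨j, hj, hyj⟩ := mem_iUnion₂.mp hy
  have hjN : j ≤ N := hN ⟨y, rfl, hyj⟩
  rw [mem_Ici] at hj
  omega

/-- Let `(X, ℬ, m)` be a probability space and `T : X → X` a map such that `T(A)` is measurable
whenever `A` is. Let `(Y_j)` be pairwise disjoint measurable subsets of `X`. If `T` is
finite-to-one, then `m(T(⋃_{j ≥ l} Y_j)) → 0` as `l → ∞`. -/
theorem stmt8 {X : Type*} [MeasurableSpace X] (m : Measure X) [IsProbabilityMeasure m]
    (T : X → X) (hT : ∀ A : Set X, MeasurableSet A → MeasurableSet (T '' A))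
    (Y : ℕ → Set X) (hmeas : ∀ j, MeasurableSet (Y j))
    (hdisj : Pairwise (Function.onFun Disjoint Y))
    (hfto : ∀ x : X, (T ⁻¹' {x}).Finite) :
    Tendsto (fun l : ℕ => m (T '' ⋃ j ∈ Set.Ici l, Y j)) atTop (nhds 0) := by
  have hmeasA (l : ℕ) : NullMeasurableSet (T '' ⋃ j ∈ Ici l, Y j) m :=
    (hT _ (.biUnion (to_countable _) fun j _ => hmeas j)).nullMeasurableSet
  have hanti : Antitone fun l : ℕ => T '' ⋃ j ∈ Ici l, Y j := fun a b hab =>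
    image_mono (biUnion_subset_biUnion_left (Ici_subset_Ici.mpr hab))
  have := tendsto_measure_iInter_atTop hmeasA hanti ⟨0, measure_ne_top m _⟩
  rwa [iInter_image_biUnion_Ici_eq_empty hdisj hfto, measure_empty] at this
end

section
/- Let T be a Marco–Martens map on the probability space (X, ℬ, m) with Marco–Martens cover {X_j}_{j≥0}. Then for every j ≥ 0 the sequence (m_n(X_j))_{n≥1} is bounded, i.e. sup_{n≥1} m_n(X_j) < +∞; consequently sup_{n≥1} m_n(A) < +∞ for every measurable A ⊆ X_j, and in particular for every measurable A ⊆ Y_j := X_j \ ⋃_{i<j} X_i. -/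
open MeasureTheory Set Filter

/-- `MMY Xs j = Y_j := X_j \ ⋃_{i < j} X_i`. -/
def MMY {X : Type*} (Xs : ℕ → Set X) (j : ℕ) : Set X := Xs j \ ⋃ i ∈ Set.Iio j, Xs i

/-- `T` is a Marco–Martens map on the probability space `(X, ℬ, m)` with Marco–Martens cover
`(X_j)_{j ≥ 0}` and constants `(K_j)_{j ≥ 0}` (condition (4)): `T` is measurable, maps
measurable sets to measurable sets, `m` is quasi-invariant under `T`, and conditions
(2)–(6) of the definition hold. -/
structure MarcoMartens {X : Type*} [MeasurableSpace X] (m : Measure X) (T : X → X)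
    (Xs : ℕ → Set X) (K : ℕ → ℝ) : Prop where
  measurable_T : Measurable T
  image_meas : ∀ A : Set X, MeasurableSet A → MeasurableSet (T '' A)
  quasi_invariant : m.map T ≪ m
  meas_Xs : ∀ j, MeasurableSet (Xs j)
  cover : m (univ \ ⋃ n, Xs n) = 0
  cond3 : ∀ i j : ℕ, ∃ k : ℕ, 0 < m (Xs i ∩ T^[k] ⁻¹' Xs j)
  one_le_K : ∀ j, 1 ≤ K j
  cond4 : ∀ j : ℕ, ∀ A B : Set X, MeasurableSet A → MeasurableSet B →
    A ⊆ Xs j → B ⊆ Xs j → ∀ n : ℕ,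
    m (T^[n] ⁻¹' A) * m B ≤ ENNReal.ofReal (K j) * (m A * m (T^[n] ⁻¹' B))
  cond5 : ∑' n : ℕ, m (T^[n] ⁻¹' Xs 0) = ⊤
  cond6 : Tendsto (fun l : ℕ => m (T '' ⋃ j ∈ Set.Ici l, MMY Xs j)) atTop (nhds 0)

/-- `mseq m T Xs A n = m_n(A) := (Σ_{k=0}^n m(T^{-k}A)) / (Σ_{k=0}^n m(T^{-k}X_0))`. -/
noncomputable def mseq {X : Type*} [MeasurableSpace X] (m : Measure X) (T : X → X)
    (Xs : ℕ → Set X) (A : Set X) (n : ℕ) : ℝ :=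
  (∑ k ∈ Finset.range (n + 1), (m (T^[k] ⁻¹' A)).toReal) /
    (∑ k ∈ Finset.range (n + 1), (m (T^[k] ⁻¹' Xs 0)).toReal)

/-!
Fix `j` and a measurable `A ⊆ X_j`. By (3) there is `r` with `B := X_j ∩ T^{-r} X_0` of positive
measure, and the distortion bound (4) applied to `A` and `B` gives
`m(T^{-k} A) ≤ (K_j / m(B)) m(T^{-(r+k)} X_0)`. Summing over `k ≤ n`, the shifted sum of the
`m(T^{-k} X_0)` exceeds the unshifted one by at most `r`, and the unshifted one is at least
`m(X_0) > 0` (again by (3)); hence `m_n(A) ≤ (K_j / m(B)) (1 + r / m(X_0))` for all `n`.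
-/

open Finset in
theorem sum_range_shift_le_sum_add {b : ℕ → ℝ} (hb_nonneg : ∀ k, 0 ≤ b k)
    (hb_le_one : ∀ k, b k ≤ 1) (r n : ℕ) :
    ∑ k ∈ range n, b (r + k) ≤ ∑ k ∈ range n, b k + r := by
  have h_shift := sum_range_add b r n
  have h_tail := sum_range_add b n r
  have h_tail_le : ∑ k ∈ range r, b (n + k) ≤ r :=
    (sum_le_sum fun k _ => hb_le_one (n + k)).trans (by simp)
  have h_head_nonneg : 0 ≤ ∑ k ∈ range r, b k := sum_nonneg fun k _ => hb_nonneg k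
  rw [add_comm r n] at h_shift
  linarith

open Finset in
theorem sum_range_div_sum_range_le_of_le_shift {a b : ℕ → ℝ} {C : ℝ} (r : ℕ) (hC : 0 ≤ C)
    (hb_nonneg : ∀ k, 0 ≤ b k) (hb_le_one : ∀ k, b k ≤ 1) (hb_zero : 0 < b 0)
    (hab : ∀ k, a k ≤ C * b (r + k)) (n : ℕ) :
    (∑ k ∈ range (n + 1), a k) / ∑ k ∈ range (n + 1), b k ≤ C * (1 + r / b 0) := by
  set D := ∑ k ∈ range (n + 1), b k
  have hb_zero_le : b 0 ≤ D :=
    single_le_sum (fun k _ => hb_nonneg k) (mem_range.2 n.succ_pos)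
  have hD : 0 < D := hb_zero.trans_le hb_zero_le
  have hr : (r : ℝ) ≤ r / b 0 * D := by
    rw [div_mul_eq_mul_div, le_div_iff₀ hb_zero]
    exact mul_le_mul_of_nonneg_left hb_zero_le r.cast_nonneg
  rw [div_le_iff₀ hD]
  calc ∑ k ∈ range (n + 1), a k
      ≤ ∑ k ∈ range (n + 1), C * b (r + k) := sum_le_sum fun k _ => hab k
    _ = C * ∑ k ∈ range (n + 1), b (r + k) := (mul_sum _ _ _).symm
    _ ≤ C * (D + r) :=
        mul_le_mul_of_nonneg_left (sum_range_shift_le_sum_add hb_nonneg hb_le_one r _) hC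
    _ ≤ C * (1 + r / b 0) * D := by
        rw [mul_assoc]
        exact mul_le_mul_of_nonneg_left (by linarith) hC

namespace MarcoMartens

variable {X : Type*} [MeasurableSpace X] {m : Measure X} {T : X → X} {Xs : ℕ → Set X}
  {K : ℕ → ℝ}

theorem measure_pos (hMM : MarcoMartens m T Xs K) (j : ℕ) : 0 < m (Xs j) :=
  let ⟨_, hk⟩ := hMM.cond3 j j
  hk.trans_le (measure_mono inter_subset_left)

theorem measureReal_preimage_mul_le [IsProbabilityMeasure m] (hMM : MarcoMartens m T Xs K)
    {j : ℕ} {A : Set X} (hA : MeasurableSet A) (hAj : A ⊆ Xs j) (r n : ℕ) :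
    m.real (T^[n] ⁻¹' A) * m.real (Xs j ∩ T^[r] ⁻¹' Xs 0) ≤
      K j * m.real (T^[r + n] ⁻¹' Xs 0) := by
  have hB : MeasurableSet (Xs j ∩ T^[r] ⁻¹' Xs 0) :=
    (hMM.meas_Xs j).inter (hMM.measurable_T.iterate r (hMM.meas_Xs 0))
  have h_le : m (T^[n] ⁻¹' A) * m (Xs j ∩ T^[r] ⁻¹' Xs 0) ≤
      ENNReal.ofReal (K j) * m (T^[r + n] ⁻¹' Xs 0) :=
    calc _ ≤ ENNReal.ofReal (K j) * (m A * m (T^[n] ⁻¹' (Xs j ∩ T^[r] ⁻¹' Xs 0))) :=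
          hMM.cond4 j A _ hA hB hAj inter_subset_left n
      _ ≤ ENNReal.ofReal (K j) * (1 * m (T^[r + n] ⁻¹' Xs 0)) := by
          rw [Function.iterate_add, preimage_comp]
          gcongr
          exacts [prob_le_one, inter_subset_right]
      _ = ENNReal.ofReal (K j) * m (T^[r + n] ⁻¹' Xs 0) := by rw [one_mul]
  have := ENNReal.toReal_mono (ENNReal.mul_ne_top ENNReal.ofReal_ne_top (measure_ne_top _ _)) h_le
  rwa [ENNReal.toReal_mul, ENNReal.toReal_mul,
    ENNReal.toReal_ofReal (zero_le_one.trans (hMM.one_le_K j))] at this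

theorem exists_mseq_le [IsProbabilityMeasure m] (hMM : MarcoMartens m T Xs K) {j : ℕ}
    {A : Set X} (hA : MeasurableSet A) (hAj : A ⊆ Xs j) :
    ∃ C : ℝ, ∀ n, mseq m T Xs A n ≤ C := by
  obtain ⟨r, hr⟩ := hMM.cond3 j 0
  have hβ : 0 < m.real (Xs j ∩ T^[r] ⁻¹' Xs 0) := ENNReal.toReal_pos hr.ne' (measure_ne_top _ _)
  refine ⟨_, sum_range_div_sum_range_le_of_le_shift r
    (div_nonneg (zero_le_one.trans (hMM.one_le_K j)) hβ.le) (fun _ => measureReal_nonneg)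
    (fun _ => measureReal_le_one) (ENNReal.toReal_pos (hMM.measure_pos 0).ne' (measure_ne_top _ _))
    (fun k => ?_)⟩
  rw [div_mul_eq_mul_div, le_div_iff₀ hβ]
  exact hMM.measureReal_preimage_mul_le hA hAj r k

end MarcoMartens

/-- For a Marco–Martens map, for every `j ≥ 0` the sequence `(m_n(X_j))_{n ≥ 1}` is bounded;
consequently `(m_n(A))_{n ≥ 1}` is bounded for every measurable `A ⊆ X_j`, and in particular
for every measurable `A ⊆ Y_j`. -/
theorem stmt9 {X : Type*} [MeasurableSpace X] (m : Measure X) [IsProbabilityMeasure m]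
    (T : X → X) (Xs : ℕ → Set X) (K : ℕ → ℝ) (hMM : MarcoMartens m T Xs K) :
    (∀ j : ℕ, ∃ C : ℝ, ∀ n : ℕ, 1 ≤ n → mseq m T Xs (Xs j) n ≤ C) ∧
    (∀ j : ℕ, ∀ A : Set X, MeasurableSet A → A ⊆ Xs j →
      ∃ C : ℝ, ∀ n : ℕ, 1 ≤ n → mseq m T Xs A n ≤ C) ∧
    (∀ j : ℕ, ∀ A : Set X, MeasurableSet A → A ⊆ MMY Xs j →
      ∃ C : ℝ, ∀ n : ℕ, 1 ≤ n → mseq m T Xs A n ≤ C) := by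
  have bounded : ∀ j A, MeasurableSet A → A ⊆ Xs j →
      ∃ C : ℝ, ∀ n : ℕ, 1 ≤ n → mseq m T Xs A n ≤ C := fun _ _ hA hAj =>
    (hMM.exists_mseq_le hA hAj).imp fun _ h n _ => h n
  exact ⟨fun j => bounded j _ (hMM.meas_Xs j) subset_rfl, bounded,
    fun j A hA hAY => bounded j A hA (hAY.trans sdiff_subset)⟩
end

section
/- Let T be a Marco–Martens map on the probability space (X, ℬ, m) with Marco–Martens cover {X_j}_{j≥0}, and let l_B be a Banach limit. Then for every j ≥ 0, the set function defined on measurable subsets A of Y_j by μ_j(A) := l_B((m_n(A))_{n≥1}) is a finite, countably additive measure on Y_j. -/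
/-!
Condition (3) gives `a` such that `D = X_j ∩ T^{-a} X_0` has positive measure. Condition (4)
with `B = D` yields `m(T^{-k} A) m(D) ≤ K_j m(A) m(T^{-(a+k)} X_0)` for `A ⊆ X_j`, and the sums of
the right-hand sides over `k ≤ n` exceed the denominator of `m_n` by at most `a`. So
`m_n(A) ≤ C_j m(A)` uniformly in `n`, and by positivity of `l_B` the finitely additive set
function `μ_j` is dominated by `C_j m` on `X_j`. A finitely additive set function dominated by a
finite measure is countably additive.
-/

open MeasureTheory Set Filter

/-- `lB` is a Banach limit: a positive, normalized, shift-invariant linear functional on the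
space of bounded real sequences. -/
structure IsBanachLimit (lB : (ℕ → ℝ) → ℝ) : Prop where
  map_add : ∀ x y : ℕ → ℝ, (∃ C, ∀ n, |x n| ≤ C) → (∃ C, ∀ n, |y n| ≤ C) →
    lB (x + y) = lB x + lB y
  map_smul : ∀ (c : ℝ) (x : ℕ → ℝ), (∃ C, ∀ n, |x n| ≤ C) → lB (c • x) = c * lB x
  nonneg : ∀ x : ℕ → ℝ, (∃ C, ∀ n, |x n| ≤ C) → (∀ n, 0 ≤ x n) → 0 ≤ lB x
  map_one : lB (fun _ => 1) = 1
  shift_invariant : ∀ x : ℕ → ℝ, (∃ C, ∀ n, |x n| ≤ C) → lB (fun n => x (n + 1)) = lB x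

open Function

theorem hasSum_iUnion_of_additive_of_enorm_le_measure {X E : Type*} [MeasurableSpace X]
    [NormedAddCommGroup E] [CompleteSpace E] {μ : Measure X} [IsFiniteMeasure μ] {S : Set X}
    (hS : MeasurableSet S) (ν : Set X → E)
    (hadd : ∀ s t, MeasurableSet s → MeasurableSet t → s ⊆ S → t ⊆ S → Disjoint s t →
      ν (s ∪ t) = ν s + ν t)
    (hle : ∀ s, MeasurableSet s → s ⊆ S → ‖ν s‖ₑ ≤ μ s)
    {A : ℕ → Set X} (hA : ∀ k, MeasurableSet (A k)) (hAS : ∀ k, A k ⊆ S)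
    (hd : Pairwise (Disjoint on A)) : HasSum (fun k => ν (A k)) (ν (⋃ k, A k)) := by
  classical
  -- `s ↦ ν (s ∩ S)` is additive on all measurable sets, hence a vector measure
  let v : VectorMeasure X E := .of_additive_of_le_measure
    (fun s => if MeasurableSet s then ν (s ∩ S) else 0)
    (fun s => by
      split_ifs with hs
      · exact (hle _ (hs.inter hS) inter_subset_right).trans (measure_mono inter_subset_left)
      · simp)
    (fun s t hs ht hst => by
      simp only [hs, ht, hs.union ht, if_true, union_inter_distrib_right]
      exact hadd _ _ (hs.inter hS) (ht.inter hS) inter_subset_right inter_subset_right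
        (hst.mono inter_subset_left inter_subset_left))
    (fun s hs => if_neg hs)
  have hv : ∀ s, MeasurableSet s → s ⊆ S → v s = ν s := fun s hs hsS => by
    simp [v, VectorMeasure.of_additive_of_le_measure, hs, inter_eq_left.2 hsS]
  simpa only [hv _ (hA _) (hAS _), hv _ (.iUnion hA) (iUnion_subset hAS)] using v.m_iUnion hA hd

open Finset in
theorem Finset.sum_range_add_le_of_le_one {g : ℕ → ℝ} (hg₀ : ∀ k, 0 ≤ g k) (hg₁ : ∀ k, g k ≤ 1)
    (a n : ℕ) : ∑ k ∈ range n, g (a + k) ≤ ∑ k ∈ range n, g k + a := by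
  have hsplit : ∑ k ∈ range a, g k + ∑ k ∈ range n, g (a + k) =
      ∑ k ∈ range n, g k + ∑ k ∈ range a, g (n + k) := by
    rw [← sum_range_add, ← sum_range_add, add_comm]
  have hhead : 0 ≤ ∑ k ∈ range a, g k := sum_nonneg fun k _ => hg₀ k
  have htail : ∑ k ∈ range a, g (n + k) ≤ a := by
    simpa using sum_le_sum fun k (_ : k ∈ range a) => hg₁ (n + k)
  linarith

namespace IsBanachLimit

variable {lB : (ℕ → ℝ) → ℝ}

theorem map_const (hlB : IsBanachLimit lB) (c : ℝ) : lB (fun _ => c) = c := by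
  have h := hlB.map_smul c (fun _ => 1) ⟨1, fun _ => by simp⟩
  rwa [hlB.map_one, mul_one, show (c • fun _ : ℕ => (1 : ℝ)) = fun _ => c by ext; simp] at h

theorem mono (hlB : IsBanachLimit lB) {x y : ℕ → ℝ} (hx : ∃ C, ∀ n, |x n| ≤ C)
    (hy : ∃ C, ∀ n, |y n| ≤ C) (hxy : ∀ n, x n ≤ y n) : lB x ≤ lB y := by
  obtain ⟨Cx, hCx⟩ := hx
  obtain ⟨Cy, hCy⟩ := hy
  have hdiff : ∃ C, ∀ n, |(y - x) n| ≤ C :=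
    ⟨Cy + Cx, fun n => (abs_sub _ _).trans (add_le_add (hCy n) (hCx n))⟩
  have hsplit := hlB.map_add x (y - x) ⟨Cx, hCx⟩ hdiff
  rw [add_sub_cancel] at hsplit
  linarith [hlB.nonneg _ hdiff fun n => sub_nonneg.2 (hxy n)]

end IsBanachLimit

section MarcoMartensSequences

variable {X : Type*} [MeasurableSpace X] {m : Measure X} {T : X → X} {Xs : ℕ → Set X}
  {K : ℕ → ℝ}

theorem mseq_nonneg (A : Set X) (n : ℕ) : 0 ≤ mseq m T Xs A n :=
  div_nonneg (Finset.sum_nonneg fun _ _ => ENNReal.toReal_nonneg)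
    (Finset.sum_nonneg fun _ _ => ENNReal.toReal_nonneg)

theorem mseq_union [IsFiniteMeasure m] (hT : Measurable T) {A B : Set X}
    (hB : MeasurableSet B) (hAB : Disjoint A B) (n : ℕ) :
    mseq m T Xs (A ∪ B) n = mseq m T Xs A n + mseq m T Xs B n := by
  rw [mseq, mseq, mseq, ← add_div, ← Finset.sum_add_distrib]
  congr 1
  refine Finset.sum_congr rfl fun k _ => ?_
  rw [preimage_union, measure_union (hAB.preimage _) (hT.iterate k hB),
    ENNReal.toReal_add (measure_ne_top m _) (measure_ne_top m _)]

theorem MarcoMartens.measure_preimage_mul_le [IsFiniteMeasure m] (hMM : MarcoMartens m T Xs K)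
    {j a : ℕ} {A B E : Set X} (hA : MeasurableSet A) (hB : MeasurableSet B) (hAj : A ⊆ Xs j)
    (hBj : B ⊆ Xs j) (hBE : B ⊆ T^[a] ⁻¹' E) (k : ℕ) :
    (m (T^[k] ⁻¹' A)).toReal * (m B).toReal ≤
      K j * (m A).toReal * (m (T^[a + k] ⁻¹' E)).toReal := by
  have hpre : T^[k] ⁻¹' B ⊆ T^[a + k] ⁻¹' E := by
    rw [iterate_add, preimage_comp]
    exact preimage_mono hBE
  have hle : m (T^[k] ⁻¹' A) * m B ≤ ENNReal.ofReal (K j) * (m A * m (T^[a + k] ⁻¹' E)) :=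
    (hMM.cond4 j A B hA hB hAj hBj k).trans (by gcongr)
  have hK : 0 ≤ K j := zero_le_one.trans (hMM.one_le_K j)
  simpa [ENNReal.toReal_mul, ENNReal.toReal_ofReal hK, mul_assoc] using
    ENNReal.toReal_mono (by finiteness) hle

open Finset in
theorem MarcoMartens.exists_mseq_le_s10 [IsProbabilityMeasure m] (hMM : MarcoMartens m T Xs K) (j : ℕ) :
    ∃ C : ℝ, ∀ A, MeasurableSet A → A ⊆ Xs j → ∀ n, mseq m T Xs A n ≤ C * (m A).toReal := by
  obtain ⟨a, ha⟩ := hMM.cond3 j 0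
  set D := Xs j ∩ T^[a] ⁻¹' Xs 0
  have hD : MeasurableSet D :=
    (hMM.meas_Xs j).inter (hMM.measurable_T.iterate a (hMM.meas_Xs 0))
  have hd : 0 < (m D).toReal := ENNReal.toReal_pos ha.ne' (measure_ne_top m D)
  -- by quasi-invariance `X_0` is not null, since `T^[a] ⁻¹' X_0` contains `D`
  have hc : 0 < (m (Xs 0)).toReal := by
    refine ENNReal.toReal_pos (fun h0 => ha.ne' (measure_mono_null inter_subset_right ?_))
      (measure_ne_top m _)
    exact (Measure.QuasiMeasurePreserving.iterate ⟨hMM.measurable_T, hMM.quasi_invariant⟩ a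
      |>.preimage_null h0)
  refine ⟨K j * (1 + a / (m (Xs 0)).toReal) / (m D).toReal, fun A hA hAj n => ?_⟩
  set g : ℕ → ℝ := fun k => (m (T^[k] ⁻¹' Xs 0)).toReal
  set N := ∑ k ∈ range (n + 1), (m (T^[k] ⁻¹' A)).toReal
  set M := ∑ k ∈ range (n + 1), g k
  have hKA : 0 ≤ K j * (m A).toReal :=
    mul_nonneg (zero_le_one.trans (hMM.one_le_K j)) ENNReal.toReal_nonneg
  have hnum : N * (m D).toReal ≤ K j * (m A).toReal * (M + a) := by
    calc N * (m D).toReal ≤ ∑ k ∈ range (n + 1), K j * (m A).toReal * g (a + k) := by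
          rw [sum_mul]
          exact sum_le_sum fun k _ =>
            hMM.measure_preimage_mul_le hA hD hAj inter_subset_left inter_subset_right k
      _ = K j * (m A).toReal * ∑ k ∈ range (n + 1), g (a + k) := (mul_sum ..).symm
      _ ≤ K j * (m A).toReal * (M + a) := by
          refine mul_le_mul_of_nonneg_left ?_ hKA
          exact sum_range_add_le_of_le_one (g := g) (fun _ => ENNReal.toReal_nonneg)
            (fun _ => ENNReal.toReal_le_of_le_ofReal zero_le_one (by simpa using prob_le_one)) a _
  have hden : (m (Xs 0)).toReal ≤ M :=
    single_le_sum (f := g) (fun _ _ => ENNReal.toReal_nonneg) (mem_range.2 n.succ_pos)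
  rw [mseq, div_le_iff₀ (hc.trans_le hden)]
  calc N ≤ K j * (m A).toReal * (M + a) / (m D).toReal := (le_div_iff₀ hd).2 hnum
    _ ≤ K j * (m A).toReal * (M + a * (M / (m (Xs 0)).toReal)) / (m D).toReal := by
        refine div_le_div_of_nonneg_right (mul_le_mul_of_nonneg_left ?_ hKA) hd.le
        exact add_le_add_right
          (le_mul_of_one_le_right (Nat.cast_nonneg a) ((one_le_div hc).2 hden)) M
    _ = K j * (1 + a / (m (Xs 0)).toReal) / (m D).toReal * (m A).toReal * M := by ring

end MarcoMartensSequences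

noncomputable def banachMeasure {X : Type*} [MeasurableSpace X] (lB : (ℕ → ℝ) → ℝ)
    (m : Measure X) (T : X → X) (Xs : ℕ → Set X) (A : Set X) : ℝ :=
  lB fun n => mseq m T Xs A (n + 1)

namespace MarcoMartens

variable {X : Type*} [MeasurableSpace X] {m : Measure X} [IsProbabilityMeasure m] {T : X → X}
  {Xs : ℕ → Set X} {K : ℕ → ℝ} {lB : (ℕ → ℝ) → ℝ} {j : ℕ} {A B : Set X}

theorem bounded_mseq (hMM : MarcoMartens m T Xs K) (hA : MeasurableSet A) (hAj : A ⊆ Xs j) :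
    ∃ C, ∀ n, |mseq m T Xs A (n + 1)| ≤ C := by
  obtain ⟨C, hC⟩ := hMM.exists_mseq_le_s10 j
  exact ⟨C * (m A).toReal, fun n => (abs_of_nonneg (mseq_nonneg A _)).trans_le (hC A hA hAj _)⟩

theorem banachMeasure_nonneg (hMM : MarcoMartens m T Xs K) (hlB : IsBanachLimit lB)
    (hA : MeasurableSet A) (hAj : A ⊆ Xs j) : 0 ≤ banachMeasure lB m T Xs A :=
  hlB.nonneg _ (hMM.bounded_mseq hA hAj) fun _ => mseq_nonneg A _

theorem banachMeasure_union (hMM : MarcoMartens m T Xs K) (hlB : IsBanachLimit lB)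
    (hA : MeasurableSet A) (hB : MeasurableSet B) (hAj : A ⊆ Xs j) (hBj : B ⊆ Xs j)
    (hAB : Disjoint A B) :
    banachMeasure lB m T Xs (A ∪ B) = banachMeasure lB m T Xs A + banachMeasure lB m T Xs B := by
  rw [banachMeasure, banachMeasure, banachMeasure,
    ← hlB.map_add _ _ (hMM.bounded_mseq hA hAj) (hMM.bounded_mseq hB hBj)]
  congr 1
  ext n
  exact mseq_union hMM.measurable_T hB hAB _

theorem exists_enorm_banachMeasure_le (hMM : MarcoMartens m T Xs K) (hlB : IsBanachLimit lB)
    (j : ℕ) : ∃ C : NNReal, ∀ A, MeasurableSet A → A ⊆ Xs j →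
      ‖banachMeasure lB m T Xs A‖ₑ ≤ (C • m) A := by
  obtain ⟨C, hC⟩ := hMM.exists_mseq_le_s10 j
  refine ⟨C.toNNReal, fun A hA hAj => ?_⟩
  have hle : banachMeasure lB m T Xs A ≤ C * (m A).toReal :=
    (hlB.mono (hMM.bounded_mseq hA hAj) ⟨_, fun _ => le_rfl⟩ fun n => hC A hA hAj _).trans_eq
      (hlB.map_const _)
  rw [Real.enorm_eq_ofReal_abs, abs_of_nonneg (hMM.banachMeasure_nonneg hlB hA hAj),
    Measure.smul_apply, ENNReal.smul_def, smul_eq_mul, ENNReal.ofNNReal_toNNReal,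
    ← ENNReal.ofReal_toReal (measure_ne_top m A), ← ENNReal.ofReal_mul' ENNReal.toReal_nonneg]
  exact ENNReal.ofReal_le_ofReal hle

end MarcoMartens

/-- For a Marco–Martens map and a Banach limit `lB`, for every `j ≥ 0` the set function
`μ_j(A) := lB((m_n(A))_{n ≥ 1})` on measurable subsets `A` of `Y_j` is nonnegative and
countably additive, i.e. a finite measure on `Y_j`. -/
theorem stmt10 {X : Type*} [MeasurableSpace X] (m : Measure X) [IsProbabilityMeasure m]
    (T : X → X) (Xs : ℕ → Set X) (K : ℕ → ℝ) (hMM : MarcoMartens m T Xs K)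
    (lB : (ℕ → ℝ) → ℝ) (hlB : IsBanachLimit lB) (j : ℕ) :
    (∀ A : Set X, MeasurableSet A → A ⊆ MMY Xs j →
      0 ≤ lB (fun n => mseq m T Xs A (n + 1))) ∧
    (∀ A : ℕ → Set X, (∀ k, MeasurableSet (A k)) → (∀ k, A k ⊆ MMY Xs j) →
      Pairwise (Function.onFun Disjoint A) →
      HasSum (fun k => lB (fun n => mseq m T Xs (A k) (n + 1)))
        (lB (fun n => mseq m T Xs (⋃ k, A k) (n + 1)))) := by
  have hYX : MMY Xs j ⊆ Xs j := sdiff_subset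
  obtain ⟨C, hC⟩ := hMM.exists_enorm_banachMeasure_le hlB j
  refine ⟨fun A hA hAY => hMM.banachMeasure_nonneg hlB hA (hAY.trans hYX),
    fun A hA hAY hd => ?_⟩
  exact hasSum_iUnion_of_additive_of_enorm_le_measure (hMM.meas_Xs j) (banachMeasure lB m T Xs)
    (fun s t hs ht hsj htj hst => hMM.banachMeasure_union hlB hs ht hsj htj hst) hC hA
    (fun k => (hAY k).trans hYX) hd
end
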